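/- arXiv:1710.08794 — 7 statements merged into one kernel-verified Lean document; each statement's English description precedes it below -/
import Mathlib

section
/- Let N ≥ 1 and let f : ℝ → ℝ be Lebesgue integrable. Suppose that f(x) ≥ 0 for all x ∈ ℝ, and that for all x, y ∈ ℝ^N one has Δ_N(x)·Δ_N(y)·det[f(x_b − y_c)]_{b,c=1,…,N} ≥ 0. Then f is a Pólya frequency function of order N, i.e. for every m = 1,…,N and all x, y ∈ ℝ^m one has Δ_m(x)·Δ_m(y)·det[f(x_b − y_c)]_{b,c=1,…,m} ≥ 0. -/
/-!
Descend from order `n + 1` to order `n`. Given `x, y ∈ ℝⁿ`, prepend the points `t - s` to `x` and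
`-s` to `y`, where `f t > 0`. Since `f` is integrable, `s` can be sent to `+∞` along a sequence on
which the new off-diagonal entries `f (x b + s)` and `f (t - s - y c)` tend to `0`; the kernel
matrix then tends to `diag (f t, [f (x b - y c)])`, while the two Vandermonde determinants pick up
positive factors. The sign condition of order `n + 1` therefore passes to `f t` times the one of
order `n` in the limit.
-/

open MeasureTheory Finset

/-- The Vandermonde determinant `Δ_m(a) = ∏_{1 ≤ b < c ≤ m} (a_c − a_b)`. -/
noncomputable def vdm {m : ℕ} (a : Fin m → ℝ) : ℝ :=
  ∏ p ∈ Finset.univ.filter (fun p : Fin m × Fin m => p.1 < p.2), (a p.2 - a p.1)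

open Filter Topology

lemma vdm_cons {n : ℕ} (T : ℝ) (x : Fin n → ℝ) :
    vdm (Fin.cons T x) = (∏ b, (x b - T)) * vdm x := by
  simp only [vdm, prod_filter, Fintype.prod_prod_type]
  simp [Fin.prod_univ_succ, Fin.succ_pos]

def kernelMatrix {m : ℕ} (f : ℝ → ℝ) (x y : Fin m → ℝ) : Matrix (Fin m) (Fin m) ℝ :=
  Matrix.of fun b c => f (x b - y c)

def DetCond (f : ℝ → ℝ) (m : ℕ) : Prop :=
  ∀ x y : Fin m → ℝ, 0 ≤ vdm x * vdm y * (kernelMatrix f x y).det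

lemma Matrix.det_of_cons_cons_zero {R : Type*} [CommRing R] {n : ℕ} (a : R)
    (A : Matrix (Fin n) (Fin n) R) :
    (Matrix.of (Fin.cons (Fin.cons a 0) fun b => Fin.cons 0 (A b))).det = a * A.det := by
  rw [Matrix.det_succ_row_zero, Fin.sum_univ_succ]
  simp only [Fin.coe_ofNat_eq_mod, Nat.zero_mod, pow_zero, Matrix.of_apply, Fin.cons_zero, one_mul,
    Fin.succAbove_zero, Fin.cons_succ, Pi.zero_apply, mul_zero, zero_mul, sum_const_zero, add_zero]
  rfl

lemma exists_ge_forall_norm_lt_of_integrable {ι E : Type*} [Fintype ι] [NormedAddCommGroup E]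
    {g : ι → ℝ → E} (hg : ∀ i, Integrable (g i)) {ε : ℝ} (hε : 0 < ε) (k : ℝ) :
    ∃ s ≥ k, ∀ i, ‖g i s‖ < ε := by
  have hbad : volume (⋃ i, {s | ε ≤ ‖g i s‖}) < ⊤ :=
    (measure_iUnion_fintype_le _ _).trans_lt <|
      ENNReal.sum_lt_top.2 fun i _ => (hg i).measure_norm_ge_lt_top hε
  have hIci : ¬ Set.Ici k ⊆ ⋃ i, {s | ε ≤ ‖g i s‖} := fun h => by
    simpa [Real.volume_Ici] using (measure_mono h).trans_lt hbad
  obtain ⟨s, hks, hs⟩ := Set.not_subset.1 hIci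
  exact ⟨s, hks, by simpa using hs⟩

lemma exists_seq_tendsto_atTop_forall_tendsto_zero_of_integrable {ι E : Type*} [Fintype ι]
    [NormedAddCommGroup E] {g : ι → ℝ → E} (hg : ∀ i, Integrable (g i)) :
    ∃ s : ℕ → ℝ, Tendsto s atTop atTop ∧ ∀ i, Tendsto (fun k => g i (s k)) atTop (𝓝 0) := by
  choose s hs_ge hs_lt using fun k : ℕ =>
    exists_ge_forall_norm_lt_of_integrable hg (Nat.one_div_pos_of_nat (n := k)) k
  refine ⟨s, tendsto_atTop_mono hs_ge tendsto_natCast_atTop_atTop, fun i => ?_⟩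
  exact squeeze_zero_norm (fun k => (hs_lt k i).le) tendsto_one_div_add_atTop_nhds_zero_nat

lemma tendsto_det_kernelMatrix_cons {α : Type*} {l : Filter α} {f : ℝ → ℝ} {n : ℕ}
    {x y : Fin n → ℝ} {s : α → ℝ} (t : ℝ)
    (hx : ∀ b, Tendsto (fun a => f (x b + s a)) l (𝓝 0))
    (hy : ∀ c, Tendsto (fun a => f (t - s a - y c)) l (𝓝 0)) :
    Tendsto (fun a => (kernelMatrix f (Fin.cons (t - s a) x) (Fin.cons (-s a) y)).det) l
      (𝓝 (f t * (kernelMatrix f x y).det)) := by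
  rw [← Matrix.det_of_cons_cons_zero]
  refine ((continuous_id.matrix_det).tendsto _).comp <|
    tendsto_pi_nhds.2 fun i => tendsto_pi_nhds.2 fun j => ?_
  cases i using Fin.cases <;> cases j using Fin.cases <;>
    simp [kernelMatrix, hx, hy, tendsto_const_nhds]

lemma detCond_zero (n : ℕ) : DetCond 0 n := by
  intro x y
  rcases n.eq_zero_or_pos with rfl | hn
  · simp [vdm]
  · have : Nonempty (Fin n) := Fin.pos_iff_nonempty.1 hn
    rw [show kernelMatrix 0 x y = 0 from rfl, Matrix.det_zero, mul_zero]

lemma DetCond.of_succ {f : ℝ → ℝ} (hf : Integrable f) (hpos : ∀ t, 0 ≤ f t) {n : ℕ}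
    (h : DetCond f (n + 1)) : DetCond f n := by
  by_cases hzero : f = 0
  · exact hzero ▸ detCond_zero n
  obtain ⟨t, ht⟩ : ∃ t, 0 < f t := by
    by_contra! hle
    exact hzero (funext fun t => (hle t).antisymm (hpos t))
  intro x y
  obtain ⟨s, hs_top, hs_zero⟩ := exists_seq_tendsto_atTop_forall_tendsto_zero_of_integrable
    (g := Sum.elim (fun b s => f (x b + s)) (fun c s => f (t - s - y c))) <| by
      rintro (b | c)
      · exact hf.comp_add_left (x b)
      · simpa only [Sum.elim_inr, sub_right_comm] using hf.comp_sub_left (t - y c)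
  have hdet :=
    tendsto_det_kernelMatrix_cons t (fun b => hs_zero (.inl b)) (fun c => hs_zero (.inr c))
  have hlarge : ∀ᶠ k in atTop, (∀ b, t - s k < x b) ∧ ∀ c, -s k < y c := by
    refine (eventually_all.2 fun b => ?_).and (eventually_all.2 fun c => ?_)
    · filter_upwards [hs_top.eventually_gt_atTop (t - x b)] with k hk
      linarith
    · filter_upwards [hs_top.eventually_gt_atTop (-y c)] with k hk
      linarith
  have hev : ∀ᶠ k in atTop, 0 ≤ vdm x * vdm y *
      (kernelMatrix f (Fin.cons (t - s k) x) (Fin.cons (-s k) y)).det := by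
    filter_upwards [hlarge] with k ⟨hxk, hyk⟩
    have hprod : 0 < (∏ b, (x b - (t - s k))) * ∏ c, (y c - -s k) :=
      mul_pos (prod_pos fun b _ => sub_pos.2 (hxk b)) (prod_pos fun c _ => sub_pos.2 (hyk c))
    have hk := h (Fin.cons (t - s k) x) (Fin.cons (-s k) y)
    rw [vdm_cons, vdm_cons, show ∀ P a Q b d : ℝ, P * a * (Q * b) * d = P * Q * (a * b * d) from
      fun _ _ _ _ _ => by ring] at hk
    exact (mul_nonneg_iff_of_pos_left hprod).1 hk
  have hlim := ge_of_tendsto (hdet.const_mul (vdm x * vdm y)) hev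
  exact (mul_nonneg_iff_of_pos_left ht).1 (by rwa [mul_left_comm] at hlim)

theorem integrable_nonneg_detCond_isPolyaFrequencyFunction_general
    (N : ℕ) (f : ℝ → ℝ)
    (hf : Integrable f)
    (hpos : ∀ x : ℝ, 0 ≤ f x)
    (hdetN : ∀ x y : Fin N → ℝ,
      0 ≤ vdm x * vdm y * Matrix.det (Matrix.of fun b c : Fin N => f (x b - y c))) :
    ∀ m : ℕ, 1 ≤ m → m ≤ N → ∀ x y : Fin m → ℝ,
      0 ≤ vdm x * vdm y * Matrix.det (Matrix.of fun b c : Fin m => f (x b - y c)) :=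
  fun _ _ hm => Nat.decreasingInduction (motive := fun m _ => DetCond f m)
    (fun _ _ h => h.of_succ hf hpos) hdetN hm

/-- an integrable nonnegative `f` satisfying the sign condition of order `N`
satisfies it for every order `m = 1, …, N`, i.e. it is a Pólya frequency function of order `N`. -/
theorem integrable_nonneg_detCond_isPolyaFrequencyFunction
    (N : ℕ) (hN : 1 ≤ N) (f : ℝ → ℝ)
    (hf : Integrable f)
    (hpos : ∀ x : ℝ, 0 ≤ f x)
    (hdetN : ∀ x y : Fin N → ℝ,
      0 ≤ vdm x * vdm y * Matrix.det (Matrix.of fun b c : Fin N => f (x b - y c))) :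
    ∀ m : ℕ, 1 ≤ m → m ≤ N → ∀ x y : Fin m → ℝ,
      0 ≤ vdm x * vdm y * Matrix.det (Matrix.of fun b c : Fin m => f (x b - y c)) :=
  integrable_nonneg_detCond_isPolyaFrequencyFunction_general N f hf hpos hdetN
end

section
/- Let n ≥ 2, let ν ∈ ℕ₀ ∪ {−1/2, 1/2}, and let ω̃ belong to the class L¹_{H₂}(ℝ) for n with support contained in [0,∞) (so that in particular lim_{y→0⁺} ω̃^{(j)}(y) = 0 for j = 0,…,n−2). Define ω : (0,∞) → ℝ by ω(x) = (1/Γ(ν+1)) ∫₀^∞ (x/y)^ν · e^{−x/y} · ω̃(y) · y^{−1} dy. Then for every l = 0,…,n−1 and every x > 0 one has (D_ν^l ω)(x) = (1/Γ(ν+1)) ∫₀^∞ (x/y)^ν · e^{−x/y} · (−1)^l · ω̃^{(l)}(y) · y^{−1} dy. -/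
/-!
For `x, y > 0` the kernel is
`(x / y) ^ ν * exp (-(x / y)) / y = x ^ ν * y ^ (-(ν + 1)) * exp (-(x / y))`,
so the transform of `h` is `x ^ ν * Φ_{ν+1}(x)` with
`Φ_m(x) = ∫₀^∞ y ^ (-m) * exp (-(x / y)) * h y dy`. Differentiating under the integral
(dominated, as `y ^ (-m) * exp (-(x / y))` is bounded uniformly in `y > 0` for `x` away from `0`)
gives `Φ_m' = -Φ_{m+1}`, hence
`D_ν (x ^ ν * Φ_{ν+1}) = x ^ ν * (x * Φ_{ν+3} - (ν + 1) * Φ_{ν+2})`.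
The integrand on the right is `h` times the `y`-derivative of the kernel, so integrating by parts
in `y` (the kernel vanishes at `0⁺` and at `∞`, where `h` has a limit because `h'` is integrable)
turns it into minus the transform of `h'`. Iterating gives the theorem.
-/

open MeasureTheory Finset

/-- The differential operator `(D_ν f)(x) = x^ν · d/dx( x^{1−ν} · f′(x) )`. -/
noncomputable def Dnu (ν : ℝ) (f : ℝ → ℝ) : ℝ → ℝ :=
  fun x => x ^ ν * deriv (fun t : ℝ => t ^ (1 - ν) * deriv f t) x

open Set Filter Topology Real

theorem rpow_mul_exp_neg_le {m u : ℝ} (hm : 0 ≤ m) (hu : 0 ≤ u) :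
    u ^ m * exp (-u) ≤ (m / exp 1) ^ m := by
  rcases hm.eq_or_lt with rfl | hm
  · simpa using exp_le_one_iff.2 (neg_nonpos.2 hu)
  -- `u / m ≤ exp (u / m - 1)`, raised to the power `m`
  have key : u ≤ m / exp 1 * exp (u / m) := by
    have := add_one_le_exp (u / m - 1)
    rw [exp_sub, sub_add_cancel, le_div_iff₀ (exp_pos 1)] at this
    rw [div_mul_eq_mul_div, le_div_iff₀ (exp_pos 1)]
    calc u * exp 1 = m * (u / m * exp 1) := by field_simp
      _ ≤ m * exp (u / m) := by gcongr
  calc u ^ m * exp (-u)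
      ≤ (m / exp 1 * exp (u / m)) ^ m * exp (-u) := by gcongr
    _ = (m / exp 1) ^ m := by
      rw [mul_rpow (by positivity) (exp_pos _).le, ← exp_mul, div_mul_cancel₀ u hm.ne',
        mul_assoc, ← exp_add, add_neg_cancel, exp_zero, mul_one]

noncomputable def expKernel (m x y : ℝ) : ℝ := y ^ (-m) * exp (-(x / y))

noncomputable def expTransform (m : ℝ) (h : ℝ → ℝ) (x : ℝ) : ℝ :=
  ∫ y in Ioi 0, expKernel m x y * h y

section expKernel

variable {m x y : ℝ}

theorem expKernel_nonneg (hy : 0 ≤ y) : 0 ≤ expKernel m x y := by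
  unfold expKernel; positivity

theorem expKernel_le {a : ℝ} (hm : 0 ≤ m) (ha : 0 < a) (hax : a ≤ x) (hy : 0 < y) :
    expKernel m x y ≤ a ^ (-m) * (m / exp 1) ^ m := by
  calc expKernel m x y ≤ y ^ (-m) * exp (-(a / y)) := by
        unfold expKernel; gcongr
    _ = a ^ (-m) * ((a / y) ^ m * exp (-(a / y))) := by
        rw [div_rpow ha.le hy.le, rpow_neg ha.le, rpow_neg hy.le]
        field_simp
    _ ≤ a ^ (-m) * (m / exp 1) ^ m := by
        gcongr
        exact rpow_mul_exp_neg_le hm (by positivity)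

theorem continuousOn_expKernel : ContinuousOn (expKernel m x) (Ioi 0) := by
  unfold expKernel
  fun_prop (disch := intro y hy; exact ne_of_gt hy)

theorem hasDerivAt_expKernel_fst (hy : 0 < y) :
    HasDerivAt (fun x => expKernel m x y) (-expKernel (m + 1) x y) x := by
  refine ((((hasDerivAt_id x).div_const y).neg.exp).const_mul (y ^ (-m))).congr_deriv ?_
  simp only [expKernel, neg_add, rpow_add hy, rpow_neg_one, id_eq, Pi.neg_apply]
  ring

theorem hasDerivAt_expKernel_snd (hy : 0 < y) :
    HasDerivAt (expKernel m x) (x * expKernel (m + 2) x y - m * expKernel (m + 1) x y) y := by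
  have hdiv : HasDerivAt (fun y => x / y) (-(x / y ^ 2)) y := by
    simpa [neg_div, Pi.div_def] using (hasDerivAt_const y x).div (hasDerivAt_id y) hy.ne'
  refine ((hasDerivAt_rpow_const (p := -m) (Or.inl hy.ne')).mul hdiv.neg.exp).congr_deriv ?_
  simp only [expKernel, show -(m + 2) = -m - 1 - 1 by ring, show -(m + 1) = -m - 1 by ring,
    rpow_sub_one hy.ne', Pi.neg_apply]
  ring

theorem integrableOn_expKernel_mul (hm : 0 ≤ m) (hx : 0 < x) {h : ℝ → ℝ}
    (hh : IntegrableOn h (Ioi 0)) : IntegrableOn (fun y => expKernel m x y * h y) (Ioi 0) := by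
  refine hh.bdd_mul (continuousOn_expKernel.aestronglyMeasurable measurableSet_Ioi)
    (c := x ^ (-m) * (m / exp 1) ^ m) ?_
  filter_upwards [ae_restrict_mem measurableSet_Ioi] with y hy
  rw [norm_of_nonneg (expKernel_nonneg hy.le)]
  exact expKernel_le hm hx le_rfl hy

theorem tendsto_expKernel_nhdsGT_zero (hx : 0 < x) :
    Tendsto (expKernel m x) (𝓝[>] 0) (𝓝 0) := by
  have hinv : Tendsto (fun y : ℝ => x / y) (𝓝[>] 0) atTop := by
    simpa [div_eq_mul_inv] using (tendsto_const_mul_atTop_of_pos hx).2 tendsto_inv_nhdsGT_zero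
  have := ((tendsto_rpow_mul_exp_neg_mul_atTop_nhds_zero m 1 one_pos).comp hinv).const_mul
    (x ^ (-m))
  rw [mul_zero] at this
  refine this.congr' ?_
  filter_upwards [self_mem_nhdsWithin] with y (hy : 0 < y)
  rw [Function.comp_apply, expKernel, div_rpow hx.le hy.le, rpow_neg hx.le, rpow_neg hy.le]
  field_simp

theorem tendsto_expKernel_atTop (hm : 0 < m) : Tendsto (expKernel m x) atTop (𝓝 0) := by
  have hexp : Tendsto (fun y : ℝ => exp (-(x / y))) atTop (𝓝 1) := by
    have := ((tendsto_const_nhds (x := x)).div_atTop tendsto_id).neg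
    simpa [Function.comp_def] using (continuous_exp.tendsto _).comp this
  have := (tendsto_rpow_neg_atTop hm).mul hexp
  rwa [zero_mul] at this

end expKernel

section expTransform

variable {m x : ℝ} {h : ℝ → ℝ}

theorem hasDerivAt_expTransform (hm : 0 ≤ m) (hx : 0 < x) (hh : IntegrableOn h (Ioi 0)) :
    HasDerivAt (expTransform m h) (-expTransform (m + 1) h x) x := by
  have hmeas : ∀ k t, AEStronglyMeasurable (expKernel k t) (volume.restrict (Ioi 0)) :=
    fun _ _ => continuousOn_expKernel.aestronglyMeasurable measurableSet_Ioi
  have key := hasDerivAt_integral_of_dominated_loc_of_deriv_le (μ := volume.restrict (Ioi 0))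
    (F := fun t y => expKernel m t y * h y) (F' := fun t y => -expKernel (m + 1) t y * h y)
    (bound := fun y => (x / 2) ^ (-(m + 1)) * ((m + 1) / exp 1) ^ (m + 1) * ‖h y‖)
    (Ioi_mem_nhds (half_lt_self hx)) (.of_forall fun t => (hmeas m t).mul hh.1)
    (integrableOn_expKernel_mul hm hx hh) ((hmeas (m + 1) x).neg.mul hh.1)
    ?_ (hh.norm.const_mul _) ?_
  · simp only [neg_mul, integral_neg] at key
    exact key.2
  · filter_upwards [ae_restrict_mem measurableSet_Ioi] with y hy t ht
    rw [norm_mul, norm_neg, norm_of_nonneg (expKernel_nonneg hy.le)]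
    gcongr
    exact expKernel_le (by linarith) (half_pos hx) ht.le hy
  · filter_upwards [ae_restrict_mem measurableSet_Ioi] with y hy t _
    exact (hasDerivAt_expKernel_fst hy).mul_const (h y)

theorem expTransform_deriv (hm : 0 < m) (hx : 0 < x)
    (hd : Differentiable ℝ h) (hh : IntegrableOn h (Ioi 0))
    (hh' : IntegrableOn (deriv h) (Ioi 0)) :
    expTransform m (deriv h) x = m * expTransform (m + 1) h x - x * expTransform (m + 2) h x := by
  have hint : ∀ k, 0 ≤ k → IntegrableOn (fun y => expKernel k x y * h y) (Ioi 0) :=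
    fun k hk => integrableOn_expKernel_mul hk hx hh
  have hint₁ := (hint (m + 2) (by linarith)).const_mul x
  have hint₂ := (hint (m + 1) (by linarith)).const_mul m
  have hzero : Tendsto (expKernel m x * h) (𝓝[>] 0) (𝓝 0) := by
    have := (tendsto_expKernel_nhdsGT_zero (m := m) hx).mul
      ((hd.continuous.tendsto 0).mono_left nhdsWithin_le_nhds)
    rwa [zero_mul] at this
  have htop : Tendsto (expKernel m x * h) atTop (𝓝 0) := by
    have := (tendsto_expKernel_atTop (x := x) hm).mul
      (tendsto_limUnder_of_hasDerivAt_of_integrableOn_Ioi (fun y _ => (hd y).hasDerivAt) hh')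
    rwa [zero_mul] at this
  have ibp := integral_Ioi_mul_deriv_eq_deriv_mul (fun y hy => hasDerivAt_expKernel_snd hy)
    (fun y _ => (hd y).hasDerivAt) (integrableOn_expKernel_mul hm.le hx hh')
    (IntegrableOn.congr_fun (hint₁.sub hint₂)
      (fun y _ => by simp only [Pi.mul_apply, Pi.sub_apply]; ring) measurableSet_Ioi)
    hzero htop
  have hsplit : ∫ y in Ioi 0, (x * expKernel (m + 2) x y - m * expKernel (m + 1) x y) * h y
      = x * expTransform (m + 2) h x - m * expTransform (m + 1) h x := by
    rw [expTransform, expTransform, ← integral_const_mul, ← integral_const_mul,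
      ← integral_sub hint₁ hint₂]
    congr 1 with y
    ring
  rw [expTransform, ibp, hsplit]
  ring

end expTransform

section Dnu

variable {ν x : ℝ} {f g : ℝ → ℝ}

theorem Dnu_congr_of_eventuallyEq (hfg : f =ᶠ[𝓝 x] g) : Dnu ν f x = Dnu ν g x := by
  unfold Dnu
  congr 1
  refine Filter.EventuallyEq.deriv_eq ?_
  filter_upwards [hfg.eventuallyEq_nhds] with t ht
  rw [ht.deriv_eq]

theorem Dnu_const_mul (c : ℝ) : Dnu ν (fun t => c * f t) x = c * Dnu ν f x := by
  simp only [Dnu, deriv_const_mul_field', mul_left_comm _ c, deriv_const_mul_field']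

end Dnu

noncomputable def gammaTransform (ν : ℝ) (h : ℝ → ℝ) (x : ℝ) : ℝ :=
  ∫ y in Ioi 0, (x / y) ^ ν * exp (-(x / y)) * h y / y

section gammaTransform

variable {ν x : ℝ} {h : ℝ → ℝ}

theorem gammaTransform_const_mul (c : ℝ) :
    gammaTransform ν (fun y => c * h y) x = c * gammaTransform ν h x := by
  rw [gammaTransform, gammaTransform, ← integral_const_mul]
  congr 1 with y
  ring

theorem gammaTransform_eq_rpow_mul_expTransform (hx : 0 < x) :
    gammaTransform ν h x = x ^ ν * expTransform (ν + 1) h x := by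
  rw [gammaTransform, expTransform, ← integral_const_mul]
  refine setIntegral_congr_fun measurableSet_Ioi fun y (hy : 0 < y) => ?_
  rw [expKernel, div_rpow hx.le hy.le, neg_add, rpow_add hy, rpow_neg hy.le, rpow_neg_one]
  field_simp

theorem Dnu_gammaTransform_eq_expTransform (hν : -1 ≤ ν) (hh : IntegrableOn h (Ioi 0))
    (hx : 0 < x) :
    Dnu ν (gammaTransform ν h) x
      = x ^ ν * (x * expTransform (ν + 3) h x - (ν + 1) * expTransform (ν + 2) h x) := by
  have hΦ₁ : ∀ t, 0 < t →
      HasDerivAt (expTransform (ν + 1) h) (-expTransform (ν + 2) h t) t :=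
    fun t ht => by simpa [add_assoc, one_add_one_eq_two] using
      hasDerivAt_expTransform (m := ν + 1) (by linarith) ht hh
  have hΦ₂ : HasDerivAt (expTransform (ν + 2) h) (-expTransform (ν + 3) h x) x := by
    simpa [add_assoc, show (2 : ℝ) + 1 = 3 by norm_num] using
      hasDerivAt_expTransform (m := ν + 2) (by linarith) hx hh
  have hinner : (fun t => t ^ (1 - ν) * deriv (gammaTransform ν h) t)
      =ᶠ[𝓝 x] fun t => ν * expTransform (ν + 1) h t - t * expTransform (ν + 2) h t := by
    filter_upwards [Ioi_mem_nhds hx] with t (ht : 0 < t)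
    have hF : gammaTransform ν h =ᶠ[𝓝 t] fun s => s ^ ν * expTransform (ν + 1) h s := by
      filter_upwards [Ioi_mem_nhds ht] with s hs
      exact gammaTransform_eq_rpow_mul_expTransform hs
    rw [hF.deriv_eq, HasDerivAt.deriv (f := fun s => s ^ ν * expTransform (ν + 1) h s)
      ((hasDerivAt_rpow_const (Or.inl ht.ne')).mul (hΦ₁ t ht)),
      rpow_sub_one ht.ne', rpow_sub ht, rpow_one]
    field_simp
    ring
  rw [Dnu, hinner.deriv_eq, HasDerivAt.deriv
    (f := fun t => ν * expTransform (ν + 1) h t - t * expTransform (ν + 2) h t)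
    (((hΦ₁ x hx).const_mul ν).sub ((hasDerivAt_id x).mul hΦ₂))]
  simp only [id_eq]
  ring

theorem Dnu_gammaTransform (hν : -1 < ν) (hd : Differentiable ℝ h)
    (hh : IntegrableOn h (Ioi 0)) (hh' : IntegrableOn (deriv h) (Ioi 0)) (hx : 0 < x) :
    Dnu ν (gammaTransform ν h) x = -gammaTransform ν (deriv h) x := by
  rw [Dnu_gammaTransform_eq_expTransform hν.le hh hx, gammaTransform_eq_rpow_mul_expTransform hx,
    expTransform_deriv (by linarith) hx hd hh hh', add_assoc, add_assoc, one_add_one_eq_two,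
    show (1 : ℝ) + 2 = 3 by norm_num]
  ring

end gammaTransform

theorem Dnu_iterate_of_gammaTransform_general
    (n : ℕ) (ν : ℝ)
    (hν : (∃ k : ℕ, ν = k) ∨ ν = -(1/2) ∨ ν = 1/2)
    (tω : ℝ → ℝ)
    (hdiff : ∀ j : ℕ, j < n - 1 → Differentiable ℝ (iteratedDeriv j tω))
    (hint : ∀ κ : ℝ, 1 ≤ κ → κ ≤ n → ∀ j : ℕ, j ≤ n - 1 →
      Integrable (fun x : ℝ => |x| ^ (κ - 1) * |iteratedDeriv j tω x|))
    (ω : ℝ → ℝ)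
    (hω : ∀ x : ℝ, 0 < x →
      ω x = (1 / Real.Gamma (ν + 1)) *
        ∫ y in Set.Ioi (0:ℝ), (x / y) ^ ν * Real.exp (-(x / y)) * tω y / y) :
    ∀ l : ℕ, l ≤ n - 1 → ∀ x : ℝ, 0 < x →
      ((Dnu ν)^[l] ω) x = (1 / Real.Gamma (ν + 1)) *
        ∫ y in Set.Ioi (0:ℝ),
          (x / y) ^ ν * Real.exp (-(x / y)) * ((-1 : ℝ) ^ l * iteratedDeriv l tω y) / y := by
  have hν' : -1 < ν := by
    rcases hν with ⟨k, rfl⟩ | rfl | rfl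
    · linarith [k.cast_nonneg (α := ℝ)]
    all_goals norm_num
  have hintOn : ∀ j < n, AEStronglyMeasurable (iteratedDeriv j tω) →
      IntegrableOn (iteratedDeriv j tω) (Ioi 0) := fun j hj hmeas =>
    ((integrable_norm_iff hmeas).1 (by
      simpa using hint 1 le_rfl (by norm_cast; omega) j (by omega))).integrableOn
  intro l
  induction l with
  | zero => simpa [gammaTransform] using hω
  | succ l ih =>
    intro hl x hx
    have hd := hdiff l (by omega)
    have hderivInt : IntegrableOn (deriv (iteratedDeriv l tω)) (Ioi 0) := by
      rw [← iteratedDeriv_succ]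
      refine hintOn (l + 1) (by omega) ?_
      rw [iteratedDeriv_succ]
      exact (stronglyMeasurable_deriv _).aestronglyMeasurable
    have hstep : (Dnu ν)^[l] ω =ᶠ[𝓝 x]
        fun t => 1 / Gamma (ν + 1) * ((-1) ^ l * gammaTransform ν (iteratedDeriv l tω) t) := by
      filter_upwards [Ioi_mem_nhds hx] with t ht
      rw [ih (by omega) t ht, ← gammaTransform_const_mul]
      rfl
    change _ = 1 / Gamma (ν + 1) * gammaTransform ν (fun y => _ * _) x
    rw [Function.iterate_succ_apply', Dnu_congr_of_eventuallyEq hstep, Dnu_const_mul, Dnu_const_mul,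
      Dnu_gammaTransform hν' hd (hintOn l (by omega) hd.continuous.aestronglyMeasurable)
        hderivInt hx,
      gammaTransform_const_mul, iteratedDeriv_succ, pow_succ]
    ring

/-- for `ω̃ ∈ L¹_{H₂}(ℝ)` supported in `[0,∞)` and
`ω(x) = (1/Γ(ν+1)) ∫₀^∞ (x/y)^ν e^{−x/y} ω̃(y) y⁻¹ dy`, one has
`(D_ν^l ω)(x) = (1/Γ(ν+1)) ∫₀^∞ (x/y)^ν e^{−x/y} (−1)^l ω̃^{(l)}(y) y⁻¹ dy`
for `l = 0, …, n−1` and `x > 0`. -/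
theorem Dnu_iterate_of_gammaTransform
    (n : ℕ) (hn : 2 ≤ n) (ν : ℝ)
    (hν : (∃ k : ℕ, ν = k) ∨ ν = -(1/2) ∨ ν = 1/2)
    (tω : ℝ → ℝ)
    (hpos : ∀ x : ℝ, 0 ≤ tω x)
    (hdiff : ∀ j : ℕ, j < n - 1 → Differentiable ℝ (iteratedDeriv j tω))
    (hint : ∀ κ : ℝ, 1 ≤ κ → κ ≤ n → ∀ j : ℕ, j ≤ n - 1 →
      Integrable (fun x : ℝ => |x| ^ (κ - 1) * |iteratedDeriv j tω x|))
    (hsupp : ∀ x : ℝ, x < 0 → tω x = 0)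
    (ω : ℝ → ℝ)
    (hω : ∀ x : ℝ, 0 < x →
      ω x = (1 / Real.Gamma (ν + 1)) *
        ∫ y in Set.Ioi (0:ℝ), (x / y) ^ ν * Real.exp (-(x / y)) * tω y / y) :
    ∀ l : ℕ, l ≤ n - 1 → ∀ x : ℝ, 0 < x →
      ((Dnu ν)^[l] ω) x = (1 / Real.Gamma (ν + 1)) *
        ∫ y in Set.Ioi (0:ℝ),
          (x / y) ^ ν * Real.exp (-(x / y)) * ((-1 : ℝ) ^ l * iteratedDeriv l tω y) / y :=
  Dnu_iterate_of_gammaTransform_general n ν hν tω hdiff hint ω hω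
end

section
/- Let ν ≥ −1/2 and let g : (0,∞) → ℝ be Lebesgue integrable with lim_{λ→0⁺} g(λ) = 0. Then lim_{x→0⁺} ∫₀^∞ (x/y)^{ν+1} · e^{−x/y} · g(y) · y^{−1} dy = 0. -/
/-! Put `a = ν + 1 > 0` and `k(y) = (x/y)^a e^{-x/y} / y`. Since `dy/y` is invariant under
`y ↦ x/y`, `∫₀^∞ k = Γ(a)` for every `x > 0`. Given `ε`, choose `δ` with `|g| ≤ ε` on `(0, δ)`:
there `|k g| ≤ ε k`, contributing at most `ε Γ(a)`, while on `[δ, ∞)` we have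
`k ≤ x^a / δ^{a+1}`, contributing at most `x^a δ^{-a-1} ‖g‖₁`, which tends to `0` with `x`. -/

open MeasureTheory Filter Set Real Topology

section InversionInvariance

variable {E : Type*} [NormedAddCommGroup E] [NormedSpace ℝ E] {x : ℝ}

lemma image_div_Ioi_zero (hx : 0 < x) : (fun y : ℝ => x / y) '' Ioi 0 = Ioi 0 := by
  refine Subset.antisymm ?_ fun t (ht : 0 < t) => ⟨x / t, div_pos hx ht, div_div_cancel₀ hx.ne'⟩
  rintro _ ⟨y, hy, rfl⟩
  exact div_pos hx hy

lemma hasDerivAt_const_div (x : ℝ) {y : ℝ} (hy : y ≠ 0) :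
    HasDerivAt (fun y : ℝ => x / y) (-(x / y ^ 2)) y := by
  simpa [div_eq_mul_inv, neg_div] using (hasDerivAt_inv hy).const_mul x

lemma injOn_const_div_Ioi_zero (hx : 0 < x) : InjOn (fun y : ℝ => x / y) (Ioi 0) :=
  fun _ _ _ _ h => by simpa [hx.ne'] using congrArg (x / ·) h

lemma abs_deriv_const_div_smul (hx : 0 < x) {y : ℝ} (hy : 0 < y) (f : ℝ → E) :
    |-(x / y ^ 2)| • ((x / y)⁻¹ • f (x / y)) = y⁻¹ • f (x / y) := by
  rw [smul_smul, abs_neg, abs_of_pos (by positivity)]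
  congr 1
  field_simp

theorem integral_comp_div_Ioi (f : ℝ → E) (hx : 0 < x) :
    ∫ y in Ioi 0, y⁻¹ • f (x / y) = ∫ t in Ioi 0, t⁻¹ • f t := by
  conv_rhs => rw [← image_div_Ioi_zero hx]
  rw [integral_image_eq_integral_abs_deriv_smul measurableSet_Ioi
    (fun y hy => (hasDerivAt_const_div x (ne_of_gt hy)).hasDerivWithinAt)
    (injOn_const_div_Ioi_zero hx)]
  exact setIntegral_congr_fun measurableSet_Ioi fun y hy =>
    (abs_deriv_const_div_smul hx hy f).symm

theorem integrableOn_comp_div_Ioi_iff (f : ℝ → E) (hx : 0 < x) :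
    IntegrableOn (fun y => y⁻¹ • f (x / y)) (Ioi 0) ↔
      IntegrableOn (fun t => t⁻¹ • f t) (Ioi 0) := by
  conv_rhs => rw [← image_div_Ioi_zero hx]
  rw [integrableOn_image_iff_integrableOn_abs_deriv_smul measurableSet_Ioi
    (fun y hy => (hasDerivAt_const_div x (ne_of_gt hy)).hasDerivWithinAt)
    (injOn_const_div_Ioi_zero hx)]
  exact integrableOn_congr_fun (fun y hy => (abs_deriv_const_div_smul hx hy f).symm)
    measurableSet_Ioi

end InversionInvariance

section GammaKernel

variable {a x y : ℝ}

noncomputable def gammaKernel (a x y : ℝ) : ℝ := (x / y) ^ a * exp (-(x / y)) / y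

lemma gammaKernel_nonneg (hx : 0 ≤ x) (hy : 0 ≤ y) : 0 ≤ gammaKernel a x y := by
  unfold gammaKernel
  positivity

lemma gammaKernel_eq_inv_smul (a x y : ℝ) :
    gammaKernel a x y = y⁻¹ • ((x / y) ^ a * exp (-(x / y))) := by
  rw [gammaKernel, smul_eq_mul, div_eq_inv_mul]

lemma inv_smul_rpow_mul_exp_neg {t : ℝ} (ht : 0 < t) :
    t⁻¹ • (t ^ a * exp (-t)) = exp (-t) * t ^ (a - 1) := by
  rw [smul_eq_mul, rpow_sub_one ht.ne']
  ring

theorem integrableOn_gammaKernel (ha : 0 < a) (hx : 0 < x) :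
    IntegrableOn (gammaKernel a x) (Ioi 0) := by
  rw [funext (gammaKernel_eq_inv_smul a x),
    integrableOn_comp_div_Ioi_iff (fun t => t ^ a * exp (-t)) hx]
  exact (integrableOn_congr_fun (fun t ht => (inv_smul_rpow_mul_exp_neg ht).symm)
    measurableSet_Ioi).mp (GammaIntegral_convergent ha)

theorem integral_gammaKernel (ha : 0 < a) (hx : 0 < x) :
    ∫ y in Ioi 0, gammaKernel a x y = Gamma a := by
  simp_rw [gammaKernel_eq_inv_smul a x]
  rw [integral_comp_div_Ioi (fun t => t ^ a * exp (-t)) hx, Gamma_eq_integral ha]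
  exact setIntegral_congr_fun measurableSet_Ioi fun t ht => inv_smul_rpow_mul_exp_neg ht

lemma gammaKernel_le_of_le {δ : ℝ} (ha : 0 ≤ a) (hx : 0 ≤ x) (hδ : 0 < δ) (hy : δ ≤ y) :
    gammaKernel a x y ≤ x ^ a / δ ^ (a + 1) := by
  have hy₀ : 0 < y := hδ.trans_le hy
  calc gammaKernel a x y ≤ (x / y) ^ a * 1 / y := by
        unfold gammaKernel
        gcongr
        exact exp_le_one_iff.mpr (neg_nonpos.mpr (by positivity))
    _ = x ^ a / y ^ (a + 1) := by
        rw [mul_one, div_rpow hx hy₀.le, rpow_add_one hy₀.ne', div_div]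
    _ ≤ x ^ a / δ ^ (a + 1) := by
        gcongr

theorem abs_integral_gammaKernel_mul_le {g : ℝ → ℝ} {δ ε : ℝ} (ha : 0 < a) (hx : 0 < x)
    (hδ : 0 < δ) (hg : IntegrableOn g (Ioi 0)) (hgε : ∀ y ∈ Ioo 0 δ, |g y| ≤ ε) :
    |∫ y in Ioi 0, gammaKernel a x y * g y|
      ≤ ε * Gamma a + x ^ a / δ ^ (a + 1) * ∫ y in Ioi 0, |g y| := by
  have hε : 0 ≤ ε := (abs_nonneg _).trans (hgε (δ / 2) ⟨half_pos hδ, half_lt_self hδ⟩)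
  have hbound : ∀ y ∈ Ioi (0 : ℝ), ‖gammaKernel a x y * g y‖
      ≤ ε * gammaKernel a x y + x ^ a / δ ^ (a + 1) * |g y| := by
    intro y (hy : 0 < y)
    have hk := gammaKernel_nonneg (a := a) hx.le hy.le
    rw [Real.norm_eq_abs, abs_mul, abs_of_nonneg hk]
    rcases lt_or_ge y δ with hyδ | hδy
    · have := mul_le_mul_of_nonneg_left (hgε y ⟨hy, hyδ⟩) hk
      have : 0 ≤ x ^ a / δ ^ (a + 1) * |g y| := by positivity
      linarith
    · have := mul_le_mul_of_nonneg_right (gammaKernel_le_of_le ha.le hx.le hδ hδy)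
        (abs_nonneg (g y))
      have : 0 ≤ ε * gammaKernel a x y := mul_nonneg hε hk
      linarith
  have hkInt := integrableOn_gammaKernel ha hx
  calc |∫ y in Ioi 0, gammaKernel a x y * g y|
      ≤ ∫ y in Ioi 0, (ε * gammaKernel a x y + x ^ a / δ ^ (a + 1) * |g y|) :=
        norm_integral_le_of_norm_le ((hkInt.const_mul ε).add (hg.abs.const_mul _))
          (ae_restrict_of_forall_mem measurableSet_Ioi hbound)
    _ = ε * Gamma a + x ^ a / δ ^ (a + 1) * ∫ y in Ioi 0, |g y| := by
        rw [integral_add (hkInt.const_mul ε) (hg.abs.const_mul _), integral_const_mul,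
          integral_const_mul, integral_gammaKernel ha hx]

end GammaKernel

/-- if `g` is Lebesgue integrable on `(0,∞)` with `g(λ) → 0` as `λ → 0⁺`, then
`∫₀^∞ (x/y)^{ν+1} e^{−x/y} g(y) y⁻¹ dy → 0` as `x → 0⁺`, for any `ν ≥ −1/2`. -/
theorem tendsto_gammaKernel_integral_zero
    (ν : ℝ) (hν : -(1/2) ≤ ν) (g : ℝ → ℝ)
    (hg : IntegrableOn g (Set.Ioi 0))
    (hg0 : Tendsto g (nhdsWithin 0 (Set.Ioi 0)) (nhds 0)) :
    Tendsto (fun x : ℝ =>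
        ∫ y in Set.Ioi (0:ℝ), (x / y) ^ (ν + 1) * Real.exp (-(x / y)) * g y / y)
      (nhdsWithin 0 (Set.Ioi 0)) (nhds 0) := by
  have ha : 0 < ν + 1 := by linarith
  have hΓ : 0 < Gamma (ν + 1) := Gamma_pos_of_pos ha
  have hintegrand (x y : ℝ) :
      (x / y) ^ (ν + 1) * exp (-(x / y)) * g y / y = gammaKernel (ν + 1) x y * g y := by
    rw [gammaKernel]
    ring
  simp_rw [hintegrand]
  refine Metric.tendsto_nhds.mpr fun ε hε => ?_
  obtain ⟨δ, hδ : 0 < δ, hgδ⟩ :=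
    mem_nhdsGT_iff_exists_Ioo_subset.mp (hg0 (Metric.closedBall_mem_nhds 0
      (div_pos hε (mul_pos two_pos hΓ))))
  have htail : Tendsto (fun x : ℝ => x ^ (ν + 1) / δ ^ (ν + 1 + 1) * ∫ y in Ioi 0, |g y|)
      (𝓝[>] 0) (𝓝 0) := by
    have hpow : Tendsto (fun x : ℝ => x ^ (ν + 1)) (𝓝[>] 0) (𝓝 0) :=
      ((continuous_rpow_const ha.le).tendsto' 0 0 (zero_rpow ha.ne')).mono_left nhdsWithin_le_nhds
    simpa using (hpow.div_const (δ ^ (ν + 1 + 1))).mul_const (∫ y in Ioi 0, |g y|)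
  filter_upwards [self_mem_nhdsWithin, htail.eventually (gt_mem_nhds (half_pos hε))]
    with x (hx : 0 < x) hsmall
  rw [Real.dist_0_eq_abs]
  calc _ ≤ ε / (2 * Gamma (ν + 1)) * Gamma (ν + 1)
        + x ^ (ν + 1) / δ ^ (ν + 1 + 1) * ∫ y in Ioi 0, |g y| :=
        abs_integral_gammaKernel_mul_le ha hx hδ hg fun y hy => by
          simpa using hgδ hy
    _ < ε := by
        have : ε / (2 * Gamma (ν + 1)) * Gamma (ν + 1) = ε / 2 := by field_simp
        linarith
end

section
/- Let n ≥ 1, let w₁,…,w_n : ℝ → ℝ satisfy ∫_ℝ |x|^{κ−1}·|w_b(x)| dx < ∞ for all κ ∈ [1,n] and b = 1,…,n, let C ∈ ℝ, and set p(a) = C·Δ_n(a)·det[w_b(a_c)]_{b,c=1,…,n} for a ∈ ℝ^n. Then for every s ∈ ℝ^n with pairwise distinct entries: (∏_{j=0}^{n−1} j!) · ∫_{ℝ^n} p(a) · det[exp(i·a_b·s_c)]_{b,c=1,…,n} / ( Δ_n(i·s) · Δ_n(a) ) da = C·(∏_{j=1}^n j!) · det[ ŵ_b(s_c) ]_{b,c=1,…,n}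 / Δ_n(i·s), where ŵ_b(s) = ∫_ℝ w_b(x)·e^{i·x·s} dx is the Fourier transform and Δ_n(i·s) is the Vandermonde determinant of the complex vector (i·s₁,…,i·s_n). -/
open MeasureTheory Finset

/-- The complex Vandermonde determinant. -/
noncomputable def vdmC {m : ℕ} (a : Fin m → ℂ) : ℂ :=
  ∏ p ∈ Finset.univ.filter (fun p : Fin m × Fin m => p.1 < p.2), (a p.2 - a p.1)

/-- The Fourier transform `ŵ(s) = ∫_ℝ w(x)·e^{i·x·s} dx`. -/
noncomputable def fourierT (w : ℝ → ℝ) (s : ℝ) : ℂ :=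
  ∫ x : ℝ, (w x : ℂ) * Complex.exp (Complex.I * x * s)

/-!
Wherever `Δ_n(a) = 0` two of the `a_c` coincide, so `det[w_b(a_c)] = 0` as well and
`p(a) / Δ_n(a) = C · det[w_b(a_c)]` everywhere (also for Lean's `0 / 0 = 0`). The integral is then
`C / Δ_n(is)` times `∫ det[w_b(a_c)] · det[e^{i a_c s_b}] da`, which Andréief's identity turns into
`n! · det[ŵ_b(s_c)]`; and `(∏_{j<n} j!) · n! = ∏_{j≤n} j!`.

Integrability of `|w_b|` does not make `w_b` measurable. If some `w_b` is not, the Bochner integral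
gives `ŵ_b = 0`, so the right-hand side vanishes, and so does the left: `det[e^{i a_c s_b}]` is nonzero
almost everywhere (in each variable it is a nontrivial exponential polynomial, hence analytic with
isolated zeros), so a measurable integrand would make `det[w_b(a_c)]` measurable, and a measurable
determinant that is not a.e. zero forces every `w_b` to be measurable.
-/

open Matrix

section Andreief

variable {ι α 𝕜 : Type*} [Fintype ι] [DecidableEq ι] [MeasurableSpace α] {μ : Measure α}
  [SigmaFinite μ] [RCLike 𝕜]

local notation "ε" σ => ((Equiv.Perm.sign σ : ℤ) : 𝕜)

theorem det_mul_det_eq_sum_sum (A B : Matrix ι ι 𝕜) :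
    A.det * B.det = ∑ σ : Equiv.Perm ι, ∑ τ : Equiv.Perm ι,
      (ε σ) * (ε τ) * ∏ c, A (σ c) c * B (τ c) c := by
  simp only [det_apply', Finset.sum_mul_sum, Finset.prod_mul_distrib]
  exact Finset.sum_congr rfl fun σ _ => Finset.sum_congr rfl fun τ _ => by ring

theorem sum_sign_mul_prod_eq_det (M : Matrix ι ι 𝕜) (σ : Equiv.Perm ι) :
    ∑ τ : Equiv.Perm ι, (ε σ) * (ε τ) * ∏ c, M (σ c) (τ c) = M.det := by
  have hσ : (ε σ) * (ε σ) = 1 := by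
    rw [← Int.cast_mul, ← Units.val_mul, Int.units_mul_self, Units.val_one, Int.cast_one]
  calc ∑ τ : Equiv.Perm ι, (ε σ) * (ε τ) * ∏ c, M (σ c) (τ c)
      = (ε σ) * (M.submatrix σ id)ᵀ.det := by
        simp only [det_apply', Finset.mul_sum, transpose_apply, submatrix_apply, id, mul_assoc]
    _ = M.det := by rw [det_transpose, det_permute, ← mul_assoc, hσ, one_mul]

theorem integral_det_mul_det (f g : ι → α → 𝕜)
    (hfg : ∀ b c, Integrable (fun x => f b x * g c x) μ) :
    ∫ a, (of fun b c => f b (a c)).det * (of fun b c => g b (a c)).det ∂Measure.pi (fun _ => μ)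
      = (Fintype.card ι).factorial * (of fun b c => ∫ x, f b x * g c x ∂μ).det := by
  have hprod : ∀ σ τ : Equiv.Perm ι, Integrable
      (fun a : ι → α => ∏ c, f (σ c) (a c) * g (τ c) (a c)) (Measure.pi fun _ => μ) :=
    fun σ τ => Integrable.fintype_prod (f := fun c x => f (σ c) x * g (τ c) x) fun c => hfg _ _
  simp_rw [det_mul_det_eq_sum_sum, of_apply]
  rw [integral_finsetSum _ fun σ _ => integrable_finsetSum _ fun τ _ => (hprod σ τ).const_mul _]
  calc ∑ σ : Equiv.Perm ι, ∫ a, ∑ τ : Equiv.Perm ι,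
        (ε σ) * (ε τ) * ∏ c, f (σ c) (a c) * g (τ c) (a c) ∂Measure.pi (fun _ => μ)
      = ∑ _σ : Equiv.Perm ι, (of fun b c => ∫ x, f b x * g c x ∂μ).det := by
        refine Finset.sum_congr rfl fun σ _ => ?_
        rw [integral_finsetSum _ fun τ _ => (hprod σ τ).const_mul _,
          ← sum_sign_mul_prod_eq_det _ σ]
        refine Finset.sum_congr rfl fun τ _ => ?_
        rw [integral_const_mul,
          integral_fintype_prod_eq_prod (f := fun c x => f (σ c) x * g (τ c) x)]
        rfl
    _ = _ := by rw [Finset.sum_const, Finset.card_univ, Fintype.card_perm, nsmul_eq_mul]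

end Andreief

theorem Matrix.det_updateCol_eq_sum_adjugate {ι R : Type*} [Fintype ι] [DecidableEq ι]
    [CommRing R] (A : Matrix ι ι R) (j : ι) (u : ι → R) :
    (A.updateCol j u).det = ∑ i, A.adjugate j i * u i := by
  rw [← cramer_apply, cramer_eq_adjugate_mulVec]
  rfl

theorem aestronglyMeasurable_of_mulVec {α ι 𝕜 : Type*} [MeasurableSpace α] {μ : Measure α}
    [Fintype ι] [DecidableEq ι] [Field 𝕜] [TopologicalSpace 𝕜] [IsTopologicalRing 𝕜]
    {N : Matrix ι ι 𝕜} (hN : N.det ≠ 0) {f : ι → α → 𝕜}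
    (hNf : ∀ c, AEStronglyMeasurable (fun x => ∑ b, N c b * f b x) μ) (b : ι) :
    AEStronglyMeasurable (f b) μ := by
  have hf : f b = fun x => ∑ c, N⁻¹ b c * ∑ b', N c b' * f b' x := by
    funext x
    have h : N⁻¹.mulVec (N.mulVec fun b => f b x) = fun b => f b x := by
      rw [mulVec_mulVec, nonsing_inv_mul N (isUnit_iff_ne_zero.2 hN), one_mulVec]
    exact (congrFun h b).symm
  rw [hf]
  exact Finset.aestronglyMeasurable_fun_sum _ fun c _ => (hNf c).const_mul _

section Slicing

variable {α : Type*} [MeasurableSpace α] {μ : Measure α} [SigmaFinite μ] {k : ℕ}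

theorem ae_of_ae_ae_insertNth {P : (Fin (k + 1) → α) → Prop} (hP : MeasurableSet {a | P a})
    (i : Fin (k + 1)) (h : ∀ᵐ z ∂Measure.pi (fun _ => μ), ∀ᵐ x ∂μ, P (i.insertNth x z)) :
    ∀ᵐ a ∂Measure.pi (fun _ => μ), P a := by
  have hins := (measurePreserving_piFinSuccAbove (fun _ : Fin (k + 1) => μ) i).symm
  rw [← hins.map_eq, ae_map_iff hins.measurable.aemeasurable hP]
  exact (Measure.ae_prod_iff_ae_ae (hins.measurable hP)).2
    ((Measure.ae_ae_comm (p := fun x z => P (i.insertNth x z)) (hins.measurable hP)).2 h)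

theorem MeasureTheory.AEStronglyMeasurable.ae_comp_update {β : Type*} [TopologicalSpace β]
    {F : (Fin (k + 1) → α) → β} (hF : AEStronglyMeasurable F (Measure.pi fun _ => μ))
    (i : Fin (k + 1)) :
    ∀ᵐ a ∂Measure.pi (fun _ => μ), AEStronglyMeasurable (fun x => F (Function.update a i x)) μ := by
  have he := measurePreserving_piFinSuccAbove (fun _ : Fin (k + 1) => μ) i
  have hslice := (hF.comp_measurePreserving he.symm).prodMk_right
  have hproj : Measure.QuasiMeasurePreserving (i.removeNth (α := fun _ => α))
      (Measure.pi fun _ => μ) (Measure.pi fun _ => μ) :=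
    Measure.quasiMeasurePreserving_snd.comp he.quasiMeasurePreserving
  filter_upwards [hproj.ae hslice] with a ha
  convert ha using 2 with x
  exact congrArg F (Fin.insertNth_removeNth i x a).symm

/-- At a point `a` where `W = [w_b(a_c)]` is invertible and every one-coordinate slice of the
determinant is measurable, the slices are the rows of `adjugate W` applied to `(w_b)_b`. -/
theorem aestronglyMeasurable_of_det {𝕜 : Type*} [Field 𝕜] [TopologicalSpace 𝕜]
    [IsTopologicalRing 𝕜] {n : ℕ} {w : Fin n → α → 𝕜}
    (hD : AEStronglyMeasurable (fun a : Fin n → α => (of fun b c => w b (a c)).det)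
      (Measure.pi fun _ => μ))
    (hD0 : ¬ (fun a : Fin n → α => (of fun b c => w b (a c)).det)
      =ᵐ[Measure.pi fun _ => μ] 0) (b : Fin n) :
    AEStronglyMeasurable (w b) μ := by
  obtain ⟨k, rfl⟩ : ∃ k, n = k + 1 := ⟨n - 1, by have := b.pos; omega⟩
  have hslices : ∀ᵐ a ∂Measure.pi (fun _ => μ), ∀ c, AEStronglyMeasurable
      (fun x => (of fun b c' => w b (Function.update a c x c')).det) μ :=
    ae_all_iff.2 fun c => hD.ae_comp_update c
  obtain ⟨a, ha, hdet⟩ := (hslices.and_frequently (Filter.not_eventually.1 hD0)).exists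
  set W : Matrix (Fin (k + 1)) (Fin (k + 1)) 𝕜 := of fun b c => w b (a c)
  refine aestronglyMeasurable_of_mulVec (N := W.adjugate) ?_ (fun c => ?_) b
  · rw [det_adjugate]
    exact pow_ne_zero _ hdet
  · have hcol : ∀ x, (of fun b c' => w b (Function.update a c x c'))
        = W.updateCol c fun b => w b x := by
      intro x
      ext b c'
      by_cases h : c' = c <;> simp [W, Function.update_apply, h]
    simpa only [hcol, det_updateCol_eq_sum_adjugate] using ha c

end Slicing

open Complex

section ExpDet

theorem ae_ne_zero_of_analyticOnNhd {E : Type*} [NormedAddCommGroup E] [NormedSpace ℝ E]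
    {μ : Measure ℝ} [NullSingletonClass μ] {f : ℝ → E} (hf : AnalyticOnNhd ℝ f Set.univ)
    {x₀ : ℝ} (hx₀ : f x₀ ≠ 0) : ∀ᵐ x ∂μ, f x ≠ 0 := by
  have := ae_restrict_le_codiscreteWithin (μ := μ) MeasurableSet.univ
    (hf.preimage_zero_mem_codiscrete hx₀)
  rwa [Measure.restrict_univ] at this

theorem analyticOnNhd_cexp_I_mul (t : ℝ) :
    AnalyticOnNhd ℝ (fun x : ℝ => exp (I * x * t)) Set.univ :=
  analyticOnNhd_cexp.restrictScalars.comp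
    ((analyticOnNhd_const.mul (ofRealCLM.analyticOnNhd _)).mul analyticOnNhd_const)
    (Set.mapsTo_univ _ _)

theorem hasDerivAt_cexp_I_mul (t x : ℝ) :
    HasDerivAt (fun x : ℝ => exp (I * x * t)) (exp (I * x * t) * (I * t)) x := by
  simpa using (((hasDerivAt_id x).ofReal_comp.const_mul I).mul_const (t : ℂ)).cexp

theorem linearIndependent_cexp_I_mul {ι : Type*} {t : ι → ℝ} (ht : Function.Injective t) :
    LinearIndependent ℂ (fun j (x : ℝ) => exp (I * x * t j)) := by
  let χ : ℝ → Multiplicative ℝ →* ℂ := fun t =>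
    { toFun := fun x => exp (I * x.toAdd * t)
      map_one' := by simp
      map_mul' := fun x y => by simp [add_mul, mul_add, exp_add] }
  have hχ : Function.Injective χ := fun t t' h => by
    have hd := (hasDerivAt_cexp_I_mul t 0).unique
      ((hasDerivAt_cexp_I_mul t' 0).congr_of_eventuallyEq
        (Filter.Eventually.of_forall fun x => congrArg (· (Multiplicative.ofAdd x)) h))
    simpa using hd
  exact (linearIndependent_monoidHom (Multiplicative ℝ) ℂ).comp (χ ∘ t) (hχ.comp ht)

theorem ae_sum_mul_cexp_I_mul_ne_zero {μ : Measure ℝ} [NullSingletonClass μ] {ι : Type*}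
    [Fintype ι] {t : ι → ℝ} (ht : Function.Injective t) {γ : ι → ℂ} (hγ : γ ≠ 0) :
    ∀ᵐ x : ℝ ∂μ, ∑ j, γ j * exp (I * x * t j) ≠ 0 := by
  obtain ⟨x₀, hx₀⟩ : ∃ x₀ : ℝ, ∑ j, γ j * exp (I * x₀ * t j) ≠ 0 := by
    by_contra! h
    exact hγ (funext (Fintype.linearIndependent_iff.1 (linearIndependent_cexp_I_mul ht) γ
      (funext fun x => by simpa using h x)))
  exact ae_ne_zero_of_analyticOnNhd (Finset.analyticOnNhd_fun_sum _ fun j _ =>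
    analyticOnNhd_const.mul (analyticOnNhd_cexp_I_mul (t j))) hx₀

theorem det_cexp_I_mul_cons {k : ℕ} (t : Fin (k + 1) → ℝ) (x : ℝ) (z : Fin k → ℝ) :
    (of fun b c => exp (I * (Fin.cons x z : Fin (k + 1) → ℝ) c * t b)).det
      = ∑ b : Fin (k + 1), (-1) ^ (b : ℕ) *
          (of fun b' c => exp (I * z c * t (b.succAbove b'))).det * exp (I * x * t b) := by
  rw [det_succ_column_zero]
  refine Finset.sum_congr rfl fun b _ => ?_
  simp only [of_apply, Fin.cons_zero, submatrix, Fin.cons_succ]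
  ring

theorem ae_det_cexp_I_mul_ne_zero {μ : Measure ℝ} [SigmaFinite μ] [NullSingletonClass μ] :
    ∀ {k : ℕ} {t : Fin k → ℝ}, Function.Injective t →
      ∀ᵐ a ∂Measure.pi (fun _ => μ), (of fun b c => exp (I * a c * t b)).det ≠ 0
  | 0, _, _ => by simp
  | k + 1, t, ht => by
    have hcont : Continuous fun a : Fin (k + 1) → ℝ => (of fun b c => exp (I * a c * t b)).det := by
      fun_prop
    refine ae_of_ae_ae_insertNth (hcont.isOpen_preimage _ isOpen_ne).measurableSet 0 ?_
    filter_upwards [ae_det_cexp_I_mul_ne_zero (μ := μ)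
      (ht.comp (Fin.succAbove_right_injective (p := 0)))] with z hz
    simp_rw [Fin.insertNth_zero', det_cexp_I_mul_cons]
    refine ae_sum_mul_cexp_I_mul_ne_zero ht (Function.ne_iff.2 ⟨0, ?_⟩)
    simpa using hz

end ExpDet

theorem vdmC_ne_zero {m : ℕ} {v : Fin m → ℂ} (hv : Function.Injective v) : vdmC v ≠ 0 :=
  Finset.prod_ne_zero_iff.2 fun _ hq =>
    sub_ne_zero.2 fun h => (Finset.mem_filter.1 hq).2.ne (hv h).symm

theorem det_eq_zero_of_vdm_eq_zero {m : ℕ} {R : Type*} [CommRing R] (w : Fin m → ℝ → R)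
    {a : Fin m → ℝ} (ha : vdm a = 0) : (of fun b c => w b (a c)).det = 0 := by
  obtain ⟨_, hq, hzero⟩ := Finset.prod_eq_zero_iff.1 ha
  exact det_zero_of_column_eq (Finset.mem_filter.1 hq).2.ne
    fun b => by simp [sub_eq_zero.1 hzero]

theorem vdm_mul_det_div_vdm {m : ℕ} (w : Fin m → ℝ → ℝ) (a : Fin m → ℝ) :
    vdm a * (of fun b c => w b (a c)).det / vdm a = (of fun b c => w b (a c)).det := by
  by_cases ha : vdm a = 0
  · simp [det_eq_zero_of_vdm_eq_zero w ha]
  · field_simp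

theorem ofReal_det_of {ι : Type*} [Fintype ι] [DecidableEq ι] (f : ι → ι → ℝ) :
    ((of f).det : ℂ) = (of fun b c => (f b c : ℂ)).det :=
  ofRealHom.map_det (of f)

theorem ofReal_mul_vdm_mul_det_mul_det_cexp_div {n : ℕ} (w : Fin n → ℝ → ℝ) (C : ℝ)
    (s : Fin n → ℝ) (D : ℂ) (a : Fin n → ℝ) :
    ((C * vdm a * (of fun b c => w b (a c)).det : ℝ) : ℂ) *
        (of fun b c => exp (I * a b * s c)).det / (D * vdm a)
      = C / D * ((of fun b c => (w b (a c) : ℂ)).det * (of fun b c => exp (I * a c * s b)).det) := by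
  have hT : (of fun b c => exp (I * a b * s c)).det = (of fun b c => exp (I * a c * s b)).det :=
    det_transpose (of fun b c => exp (I * a c * s b))
  rw [hT, ← ofReal_det_of]
  conv_rhs => rw [← vdm_mul_det_div_vdm w a]
  push_cast
  ring

theorem integrable_ofReal_mul_cexp_I_mul {w : ℝ → ℝ} (hw : Integrable w) (t : ℝ) :
    Integrable (fun x : ℝ => (w x : ℂ) * exp (I * x * t)) :=
  hw.ofReal.mul_bdd (by fun_prop) (c := 1) (Filter.Eventually.of_forall fun x => by
    rw [norm_exp]; simp)

theorem fourierT_eq_zero_of_not_aestronglyMeasurable {w : ℝ → ℝ}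
    (hw : ¬ AEStronglyMeasurable w volume) (t : ℝ) : fourierT w t = 0 := by
  refine integral_undef fun hint => hw ?_
  have h := hint.aestronglyMeasurable.mul
    (by fun_prop : Continuous fun x : ℝ => exp (-(I * x * t))).aestronglyMeasurable
  refine (continuous_re.comp_aestronglyMeasurable h).congr (Filter.Eventually.of_forall fun x => ?_)
  simp [mul_assoc, ← exp_add]

theorem integral_det_mul_det_cexp_I_mul_eq_zero {n : ℕ} {w : Fin n → ℝ → ℝ} {s : Fin n → ℝ}
    (hs : Function.Injective s) {b₀ : Fin n} (hb₀ : ¬ AEStronglyMeasurable (w b₀) volume) :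
    ∫ a : Fin n → ℝ, (of fun b c => (w b (a c) : ℂ)).det *
      (of fun b c => exp (I * a c * s b)).det = 0 := by
  by_cases hF : AEStronglyMeasurable (fun a : Fin n → ℝ =>
      (of fun b c => (w b (a c) : ℂ)).det * (of fun b c => exp (I * a c * s b)).det)
  swap
  · exact integral_non_aestronglyMeasurable hF
  by_cases h0 : (fun a : Fin n → ℝ => (of fun b c => w b (a c)).det) =ᵐ[volume] 0
  · refine integral_eq_zero_of_ae ?_
    filter_upwards [h0] with a ha
    simp only [Pi.zero_apply] at ha
    simp [← ofReal_det_of, ha]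
  refine absurd (aestronglyMeasurable_of_det ?_ h0 b₀) hb₀
  have hE : Continuous fun a : Fin n → ℝ => (of fun b c => exp (I * a c * s b)).det := by
    fun_prop
  refine (continuous_re.comp_aestronglyMeasurable
    (hF.mul hE.measurable.inv.aestronglyMeasurable)).congr ?_
  filter_upwards [ae_det_cexp_I_mul_ne_zero hs] with a ha
  simp [← ofReal_det_of, ha]

theorem prod_range_factorial_mul_factorial (n : ℕ) :
    (∏ j ∈ Finset.range n, (j.factorial : ℂ)) * n.factorial
      = ∏ j ∈ Finset.Icc 1 n, (j.factorial : ℂ) := by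
  exact_mod_cast (Finset.prod_range_succ _ n).symm.trans
    ((Nat.prod_range_succ_factorial n).trans (Nat.prod_Icc_factorial n).symm)

theorem fourierTransform_polynomial_ensemble_general
    (n : ℕ) (w : Fin n → ℝ → ℝ)
    (hint : ∀ b : Fin n, ∀ κ : ℝ, 1 ≤ κ → κ ≤ n →
      Integrable (fun x : ℝ => |x| ^ (κ - 1) * |w b x|))
    (C : ℝ) (p : (Fin n → ℝ) → ℝ)
    (hp : ∀ a : Fin n → ℝ,
      p a = C * vdm a * Matrix.det (Matrix.of fun b c : Fin n => w b (a c)))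
    (s : Fin n → ℝ) (hs : Function.Injective s) :
    (∏ j ∈ Finset.range n, (j.factorial : ℂ)) *
      ∫ a : Fin n → ℝ,
        (p a : ℂ) *
          Matrix.det (Matrix.of fun b c : Fin n => Complex.exp (Complex.I * (a b) * (s c))) /
          (vdmC (fun j => Complex.I * (s j)) * (vdm a : ℂ))
    = (C : ℂ) * (∏ j ∈ Finset.Icc 1 n, (j.factorial : ℂ)) *
        Matrix.det (Matrix.of fun b c : Fin n => fourierT (w b) (s c)) /
        vdmC (fun j => Complex.I * (s j)) := by
  have hD : vdmC (fun j => I * (s j)) ≠ 0 :=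
    vdmC_ne_zero ((mul_right_injective₀ I_ne_zero).comp (ofReal_injective.comp hs))
  simp_rw [hp, ofReal_mul_vdm_mul_det_mul_det_cexp_div, integral_const_mul]
  by_cases hw : ∀ b, AEStronglyMeasurable (w b) volume
  · have hwint : ∀ b, Integrable (w b) := fun b => (integrable_norm_iff (hw b)).1 (by
      simpa using hint b 1 le_rfl (by exact_mod_cast b.pos))
    rw [volume_pi, integral_det_mul_det (fun b x => (w b x : ℂ)) (fun c x => exp (I * x * s c))
      fun b c => integrable_ofReal_mul_cexp_I_mul (hwint b) (s c), Fintype.card_fin,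
      ← prod_range_factorial_mul_factorial]
    simp only [fourierT]
    field_simp
  · push Not at hw
    obtain ⟨b₀, hb₀⟩ := hw
    rw [integral_det_mul_det_cexp_I_mul_eq_zero hs hb₀, det_eq_zero_of_row_eq_zero b₀
      fun c => fourierT_eq_zero_of_not_aestronglyMeasurable hb₀ (s c)]
    simp

/-- the multivariate Fourier transform of a polynomial ensemble on `ℝ^n` is a
determinant of univariate Fourier transforms. -/
theorem fourierTransform_polynomial_ensemble
    (n : ℕ) (hn : 1 ≤ n) (w : Fin n → ℝ → ℝ)
    (hint : ∀ b : Fin n, ∀ κ : ℝ, 1 ≤ κ → κ ≤ n →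
      Integrable (fun x : ℝ => |x| ^ (κ - 1) * |w b x|))
    (C : ℝ) (p : (Fin n → ℝ) → ℝ)
    (hp : ∀ a : Fin n → ℝ,
      p a = C * vdm a * Matrix.det (Matrix.of fun b c : Fin n => w b (a c)))
    (s : Fin n → ℝ) (hs : Function.Injective s) :
    (∏ j ∈ Finset.range n, (j.factorial : ℂ)) *
      ∫ a : Fin n → ℝ,
        (p a : ℂ) *
          Matrix.det (Matrix.of fun b c : Fin n => Complex.exp (Complex.I * (a b) * (s c))) /
          (vdmC (fun j => Complex.I * (s j)) * (vdm a : ℂ))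
    = (C : ℂ) * (∏ j ∈ Finset.Icc 1 n, (j.factorial : ℂ)) *
        Matrix.det (Matrix.of fun b c : Fin n => fourierT (w b) (s c)) /
        vdmC (fun j => Complex.I * (s j)) :=
  fourierTransform_polynomial_ensemble_general n w hint C p hp s hs
end

section
/- Let f : (0,∞) → ℝ be twice differentiable, and set (D_{−1/2} f)(x) = x^{−1/2}·d/dx( x^{3/2}·f′(x) ). Assume that ∫₀^∞ x^{κ−1}·|f(x)| dx < ∞ and ∫₀^∞ x^{κ−1}·|(D_{−1/2}f)(x)| dx < ∞ for κ ∈ [1,2], that lim_{x→0⁺} x^{1/2}·d/dx( x^{1/2}·f(x) ) = 0, and that lim_{x→∞} x·f′(x) = 0 and lim_{x→∞} x^{1/2}·f(x) = 0. Then for every s > 0: ∫₀^∞ (D_{−1/2} f)(x) · cos(2·√(x·s)) dx = −s · ∫₀^∞ f(x) · cos(2·√(x·s)) dx. -/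
/-!
Write `K x = cos (2 √(x s))` and `D = D_{−1/2} = (3/2) d/dx + x d²/dx²`. The formal adjoint
`x K'' + K' / 2` of `D` sends `K` to `-s K`, so the bilinear concomitant of Lagrange's identity,
`B = x f' K + f K / 2 - x f K' = (f / 2 + x f') K + √x f · √s sin (2 √(x s))`, satisfies
`B' = (D f + s f) K`, and the theorem is `∫₀^∞ B' = B(∞) - B(0⁺) = 0`. At infinity `B` vanishes by
the decay of `x f'` and `√x f`. At `0⁺` the hypothesis says `f / 2 + x f' = √x (√x f)' → 0`, so
`(√x f)' = O(x^{-1/2})` is integrable, hence `√x f` stays bounded while `sin (2 √(x s)) → 0`.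
-/

open MeasureTheory Filter

/-- The differential operator `(D_{−1/2} f)(x) = x^{−1/2} · d/dx( x^{3/2} · f′(x) )`. -/
noncomputable def Dhalf (f : ℝ → ℝ) : ℝ → ℝ :=
  fun x => x ^ (-(1:ℝ)/2) * deriv (fun t : ℝ => t ^ ((3:ℝ)/2) * deriv f t) x

open Set Real Topology

theorem integral_Ioi_eq_sub_of_hasDerivAt_of_tendsto {F F' : ℝ → ℝ} {a la lb : ℝ}
    (hderiv : ∀ x ∈ Ioi a, HasDerivAt F (F' x) x) (hint : IntegrableOn F' (Ioi a))
    (ha : Tendsto F (𝓝[>] a) (𝓝 la)) (htop : Tendsto F atTop (𝓝 lb)) :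
    ∫ x in Ioi a, F' x = lb - la := by
  rw [← Ici_sdiff_left] at ha
  have hG : ∀ x ∈ Ioi a, HasDerivAt (Function.update F a la) (F' x) x := fun x hx =>
    (hderiv x hx).congr_of_eventuallyEq <| by
      filter_upwards [eventually_ne_nhds (ne_of_gt hx)] with y hy
      exact Function.update_of_ne hy _ _
  have htop' : Tendsto (Function.update F a la) atTop (𝓝 lb) :=
    htop.congr' <| by
      filter_upwards [eventually_ne_atTop a] with x hx
      exact (Function.update_of_ne hx _ _).symm
  simpa using integral_Ioi_of_hasDerivAt_of_tendsto
    (continuousWithinAt_update_same.mpr ha) hG hint htop'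

theorem abs_sub_le_of_abs_deriv_mul_sqrt_le {g g' : ℝ → ℝ} {a b C : ℝ} (ha : 0 < a) (hab : a ≤ b)
    (hg : ∀ t ∈ Icc a b, HasDerivAt g (g' t) t) (hbound : ∀ t ∈ Ico a b, |g' t| * √t ≤ C) :
    |g b - g a| ≤ 2 * C * (√b - √a) := by
  have hsqrt : ∀ t ∈ Ico a b,
      HasDerivWithinAt (fun t => 2 * C * (√t - √a)) (C / √t) (Ici t) t := by
    intro t ht
    have ht0 : 0 < t := ha.trans_le ht.1
    have := ((hasDerivAt_sqrt ht0.ne').sub_const (√a)).const_mul (2 * C)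
    refine (this.congr_deriv ?_).hasDerivWithinAt
    field_simp
  refine image_norm_le_of_norm_deriv_right_le_deriv_boundary'
    (f := fun t => g t - g a) (f' := g')
    (fun t ht => ((hg t ht).continuousAt.sub continuousAt_const).continuousWithinAt)
    (fun t ht => ((hg t (Ico_subset_Icc_self ht)).sub_const _).hasDerivWithinAt) (by simp)
    (fun t _ => (continuous_sqrt.sub continuous_const).const_mul _ |>.continuousWithinAt)
    hsqrt (fun t ht => ?_) (right_mem_Icc.mpr hab)
  have ht0 : 0 < √t := sqrt_pos.mpr (ha.trans_le ht.1)
  rw [Real.norm_eq_abs, le_div_iff₀ ht0]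
  exact hbound t ht

theorem isBoundedUnder_norm_nhdsGT_zero_of_hasDerivAt {g g' : ℝ → ℝ} {C : ℝ}
    (hg : ∀ x ∈ Ioi (0:ℝ), HasDerivAt g (g' x) x)
    (hbound : ∀ᶠ x in 𝓝[>] 0, |g' x| * √x ≤ C) :
    IsBoundedUnder (· ≤ ·) (𝓝[>] 0) ((‖·‖) ∘ g) := by
  obtain ⟨δ, hδ, hδsub⟩ := mem_nhdsGT_iff_exists_Ioc_subset.mp hbound
  refine isBoundedUnder_of_eventually_le (a := |g δ| + 2 * C * √δ) ?_
  filter_upwards [Ioo_mem_nhdsGT hδ] with x hx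
  have hC : 0 ≤ C :=
    (mul_nonneg (abs_nonneg _) (sqrt_nonneg _)).trans (hδsub ⟨hx.1, hx.2.le⟩)
  have hsub := abs_sub_le_of_abs_deriv_mul_sqrt_le hx.1 hx.2.le
    (fun t ht => hg t (hx.1.trans_le ht.1)) (fun t ht => hδsub ⟨hx.1.trans_le ht.1, ht.2.le⟩)
  have htri := abs_sub_abs_le_abs_sub (g x) (g δ)
  rw [abs_sub_comm] at htri
  have := mul_nonneg hC (sqrt_nonneg x)
  change |g x| ≤ _
  linarith

section

variable {f : ℝ → ℝ} {x : ℝ}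

theorem Dhalf_eq (hx : 0 < x) (hf' : DifferentiableAt ℝ (deriv f) x) :
    Dhalf f x = 3 / 2 * deriv f x + x * deriv (deriv f) x := by
  have hd : deriv (fun t => t ^ ((3:ℝ)/2) * deriv f t) x
      = 3/2 * x ^ ((3:ℝ)/2 - 1) * deriv f x + x ^ ((3:ℝ)/2) * deriv (deriv f) x :=
    ((hasDerivAt_rpow_const (Or.inl hx.ne')).mul hf'.hasDerivAt).deriv
  have e1 : x ^ (-(1:ℝ)/2) * x ^ ((3:ℝ)/2 - 1) = 1 := by rw [← rpow_add hx]; norm_num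
  have e2 : x ^ (-(1:ℝ)/2) * x ^ ((3:ℝ)/2) = x := by rw [← rpow_add hx]; norm_num
  rw [Dhalf, hd]
  linear_combination (3/2 * deriv f x) * e1 + deriv (deriv f) x * e2

theorem hasDerivAt_sqrt_mul (hx : 0 < x) (hf : DifferentiableAt ℝ f x) :
    HasDerivAt (fun t => √t * f t) ((f x / 2 + x * deriv f x) / √x) x := by
  refine ((hasDerivAt_sqrt hx.ne').mul hf.hasDerivAt).congr_deriv ?_
  have hsq : √x ^ 2 = x := sq_sqrt hx.le
  have : √x ≠ 0 := by positivity
  field_simp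
  linear_combination 2 * deriv f x * hsq

theorem rpow_half_mul_deriv_rpow_half_mul (hx : 0 < x) (hf : DifferentiableAt ℝ f x) :
    x ^ ((1:ℝ)/2) * deriv (fun t => t ^ ((1:ℝ)/2) * f t) x = f x / 2 + x * deriv f x := by
  simp_rw [← sqrt_eq_rpow]
  rw [(hasDerivAt_sqrt_mul hx hf).deriv]
  have : √x ≠ 0 := by positivity
  field_simp

end

noncomputable def hankelBoundaryTerm (f : ℝ → ℝ) (s x : ℝ) : ℝ :=
  (f x / 2 + x * deriv f x) * cos (2 * √(x * s)) + √x * f x * (√s * sin (2 * √(x * s)))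

section

variable {f : ℝ → ℝ} {s : ℝ}

theorem hasDerivAt_hankelBoundaryTerm (hs : 0 < s) {x : ℝ} (hx : 0 < x)
    (hf : DifferentiableAt ℝ f x) (hf' : DifferentiableAt ℝ (deriv f) x) :
    HasDerivAt (hankelBoundaryTerm f s)
      (Dhalf f x * cos (2 * √(x * s)) + s * (f x * cos (2 * √(x * s)))) x := by
  have hxs : 0 < x * s := mul_pos hx hs
  have harg : HasDerivAt (fun t => 2 * √(t * s)) (2 * (1 / (2 * √(x * s)) * s)) x :=
    ((hasDerivAt_sqrt hxs.ne').comp x (hasDerivAt_mul_const s)).const_mul 2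
  have h1 := ((hf.hasDerivAt.div_const 2).add ((hasDerivAt_id x).mul hf'.hasDerivAt)).mul
    ((hasDerivAt_cos _).comp x harg)
  have h2 := (hasDerivAt_sqrt_mul hx hf).mul (((hasDerivAt_sin _).comp x harg).const_mul √s)
  refine (h1.add h2).congr_deriv ?_
  simp only [Dhalf_eq hx hf', sqrt_mul hx.le, Function.comp_apply, Pi.add_apply, Pi.mul_apply,
    id_eq]
  have ha : √x ≠ 0 := by positivity
  have hb : √s ≠ 0 := by positivity
  have hxa : x = √x ^ 2 := (sq_sqrt hx.le).symm
  have hsb : s = √s ^ 2 := (sq_sqrt hs.le).symm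
  generalize cos (2 * (√x * √s)) = c
  generalize sin (2 * (√x * √s)) = d
  generalize f x = F
  generalize deriv f x = F'
  generalize deriv (deriv f) x = F''
  generalize √x = a at *
  generalize √s = b at *
  subst hxa hsb
  field_simp
  ring

theorem tendsto_hankelBoundaryTerm_atTop (hf' : Tendsto (fun x => x * deriv f x) atTop (𝓝 0))
    (hf : Tendsto (fun x => √x * f x) atTop (𝓝 0)) :
    Tendsto (hankelBoundaryTerm f s) atTop (𝓝 0) := by
  have hf0 : Tendsto f atTop (𝓝 0) := by
    have := hf.mul (tendsto_inv_atTop_zero.comp tendsto_sqrt_atTop)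
    rw [zero_mul] at this
    refine this.congr' ?_
    filter_upwards [eventually_gt_atTop 0] with x hx
    have : √x ≠ 0 := by positivity
    simp [field]
  have hcos : IsBoundedUnder (· ≤ ·) atTop ((‖·‖) ∘ fun x => cos (2 * √(x * s))) :=
    isBoundedUnder_of ⟨1, fun x => by simpa using abs_cos_le_one _⟩
  have hsin : IsBoundedUnder (· ≤ ·) atTop ((‖·‖) ∘ fun x => √s * sin (2 * √(x * s))) :=
    isBoundedUnder_of ⟨√s, fun x => by
      simpa [abs_mul, abs_of_nonneg (sqrt_nonneg s)] using
        mul_le_of_le_one_right (sqrt_nonneg s) (abs_sin_le_one _)⟩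
  have hf0' : Tendsto (fun x => f x / 2 + x * deriv f x) atTop (𝓝 0) := by
    simpa using (hf0.div_const 2).add hf'
  have := (hf0'.zero_mul_isBoundedUnder_le hcos).add (hf.zero_mul_isBoundedUnder_le hsin)
  rwa [add_zero] at this

theorem tendsto_hankelBoundaryTerm_nhdsGT_zero (hdiff : ∀ x ∈ Ioi (0:ℝ), DifferentiableAt ℝ f x)
    (h0 : Tendsto (fun x => f x / 2 + x * deriv f x) (𝓝[>] 0) (𝓝 0)) :
    Tendsto (hankelBoundaryTerm f s) (𝓝[>] 0) (𝓝 0) := by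
  have hcos : IsBoundedUnder (· ≤ ·) (𝓝[>] 0) ((‖·‖) ∘ fun x => cos (2 * √(x * s))) :=
    isBoundedUnder_of ⟨1, fun x => by simpa using abs_cos_le_one _⟩
  have hbdd : IsBoundedUnder (· ≤ ·) (𝓝[>] 0) ((‖·‖) ∘ fun x => √x * f x) := by
    refine isBoundedUnder_norm_nhdsGT_zero_of_hasDerivAt (C := 1)
      (fun x hx => hasDerivAt_sqrt_mul hx (hdiff x hx)) ?_
    have h0' : Tendsto (fun x => |f x / 2 + x * deriv f x|) (𝓝[>] 0) (𝓝 0) := by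
      simpa using h0.abs
    filter_upwards [self_mem_nhdsWithin, h0'.eventually (eventually_le_nhds one_pos)]
      with x (hx : 0 < x) hle
    have : √x ≠ 0 := by positivity
    simpa [abs_div, abs_of_pos (sqrt_pos.mpr hx), field] using hle
  have hsin : Tendsto (fun x => √s * sin (2 * √(x * s))) (𝓝[>] 0) (𝓝 0) := by
    have : Continuous (fun x => √s * sin (2 * √(x * s))) := by fun_prop
    simpa using (this.tendsto 0).mono_left nhdsWithin_le_nhds
  have := (h0.zero_mul_isBoundedUnder_le hcos).add (isBoundedUnder_le_mul_tendsto_zero hbdd hsin)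
  rwa [add_zero] at this

end

theorem integrableOn_mul_cos {u v : ℝ → ℝ} {S : Set ℝ} (hu : IntegrableOn (fun x => |u x|) S)
    (hum : AEStronglyMeasurable u (volume.restrict S)) (hv : Continuous v) :
    IntegrableOn (fun x => u x * cos (v x)) S :=
  ((integrable_norm_iff hum).mp hu).mul_bdd (continuous_cos.comp hv).aestronglyMeasurable
    (Eventually.of_forall fun x => by simpa using abs_cos_le_one (v x))

/-- the univariate Hankel-transform derivative relation
`H_{−1/2}(D_{−1/2} f)(s) = −s·H_{−1/2} f(s)`, where the Hankel kernel for `ν = −1/2` is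
`cos(2√(xs))`. -/
theorem hankel_transform_derivative_relation
    (f : ℝ → ℝ)
    (hdiff : ∀ x : ℝ, 0 < x → DifferentiableAt ℝ f x ∧ DifferentiableAt ℝ (deriv f) x)
    (hint1 : ∀ κ : ℝ, 1 ≤ κ → κ ≤ 2 →
      IntegrableOn (fun x : ℝ => x ^ (κ - 1) * |f x|) (Set.Ioi 0))
    (hint2 : ∀ κ : ℝ, 1 ≤ κ → κ ≤ 2 →
      IntegrableOn (fun x : ℝ => x ^ (κ - 1) * |Dhalf f x|) (Set.Ioi 0))
    (hlim0 : Tendsto (fun x : ℝ => x ^ ((1:ℝ)/2) * deriv (fun t : ℝ => t ^ ((1:ℝ)/2) * f t) x)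
      (nhdsWithin 0 (Set.Ioi 0)) (nhds 0))
    (hlim1 : Tendsto (fun x : ℝ => x * deriv f x) atTop (nhds 0))
    (hlim2 : Tendsto (fun x : ℝ => x ^ ((1:ℝ)/2) * f x) atTop (nhds 0)) :
    ∀ s : ℝ, 0 < s →
      ∫ x in Set.Ioi (0:ℝ), Dhalf f x * Real.cos (2 * Real.sqrt (x * s))
      = -s * ∫ x in Set.Ioi (0:ℝ), f x * Real.cos (2 * Real.sqrt (x * s)) := by
  intro s hs
  have hkernel : Continuous fun x => 2 * √(x * s) := by fun_prop
  have hDint : IntegrableOn (fun x => Dhalf f x * cos (2 * √(x * s))) (Ioi 0) := by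
    refine integrableOn_mul_cos (by simpa using hint2 1 le_rfl one_le_two) ?_ hkernel
    exact ((measurable_id.pow_const _).mul (measurable_deriv _)).aestronglyMeasurable
  have hfint : IntegrableOn (fun x => f x * cos (2 * √(x * s))) (Ioi 0) := by
    refine integrableOn_mul_cos (by simpa using hint1 1 le_rfl one_le_two) ?_ hkernel
    exact ContinuousOn.aestronglyMeasurable
      (fun x hx => (hdiff x hx).1.continuousAt.continuousWithinAt) measurableSet_Ioi
  have h0 : Tendsto (fun x => f x / 2 + x * deriv f x) (𝓝[>] 0) (𝓝 0) := by
    refine hlim0.congr' ?_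
    filter_upwards [self_mem_nhdsWithin] with x hx
    exact rpow_half_mul_deriv_rpow_half_mul hx (hdiff x hx).1
  have hFTC := integral_Ioi_eq_sub_of_hasDerivAt_of_tendsto
    (fun x hx => hasDerivAt_hankelBoundaryTerm hs hx (hdiff x hx).1 (hdiff x hx).2)
    (hDint.add (hfint.const_mul s))
    (tendsto_hankelBoundaryTerm_nhdsGT_zero (fun x hx => (hdiff x hx).1) h0)
    (tendsto_hankelBoundaryTerm_atTop hlim1 (by simpa only [sqrt_eq_rpow] using hlim2))
  rw [integral_add hDint (hfint.const_mul s), integral_const_mul, sub_self] at hFTC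
  linarith
end

section
/- The function f(x) = exp(−e^{−x}) is a Pólya frequency function of infinite order; that is, for every n ∈ ℕ and all x, y ∈ ℝ^n one has Δ_n(x)·Δ_n(y)·det[ exp(−e^{−(x_b − y_c)}) ]_{b,c=1,…,n} ≥ 0. -/
open Finset

/-!
Writing `exp (-e^{-(x - y)}) = exp (u w)` with `u = -e^{-x}` and `w = e^{y}`, both increasing
reparametrisations, the claim reduces to the strict total positivity of the kernel `exp (u w)`:
its determinants on increasing nodes never vanish, because an exponential sum with `n` distinct
frequencies has fewer than `n` zeros (Rolle), and so have the sign they have for the Vandermonde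
matrix `(e^{u_b})^c`, to which they deform continuously. For arbitrary nodes, sorting both tuples
multiplies each Vandermonde factor and the determinant by the same signs.
-/

theorem vdm_eq_det_vandermonde {m : ℕ} (a : Fin m → ℝ) :
    vdm a = (Matrix.vandermonde a).det := by
  rw [Matrix.det_vandermonde, vdm, Finset.prod_sigma']
  refine Finset.prod_nbij' (fun p => ⟨p.1, p.2⟩) (fun p => (p.1, p.2)) ?_ ?_ ?_ ?_ ?_ <;>
    simp

theorem vdm_comp_perm {m : ℕ} (a : Fin m → ℝ) (σ : Equiv.Perm (Fin m)) :
    vdm (a ∘ σ) = Equiv.Perm.sign σ * vdm a := by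
  rw [vdm_eq_det_vandermonde, vdm_eq_det_vandermonde, ← Matrix.det_permute]
  rfl

theorem vdm_pos_of_strictMono {m : ℕ} {a : Fin m → ℝ} (ha : StrictMono a) : 0 < vdm a :=
  Finset.prod_pos fun _ hp => sub_pos.2 (ha (Finset.mem_filter.1 hp).2)

theorem vdm_eq_zero_of_not_injective {m : ℕ} {a : Fin m → ℝ} (ha : ¬ Function.Injective a) :
    vdm a = 0 := by
  obtain ⟨i, j, hij, hne⟩ := Function.not_injective_iff.1 ha
  rcases hne.lt_or_gt with hlt | hlt
  · exact Finset.prod_eq_zero (i := (i, j)) (by simp [hlt]) (by simp [hij])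
  · exact Finset.prod_eq_zero (i := (j, i)) (by simp [hlt]) (by simp [hij])

theorem vdm_comp_mul_vdm_comp_mul_det_submatrix {m : ℕ} (x y : Fin m → ℝ)
    (σ τ : Equiv.Perm (Fin m)) (M : Matrix (Fin m) (Fin m) ℝ) :
    vdm (x ∘ σ) * vdm (y ∘ τ) * (M.submatrix σ τ).det = vdm x * vdm y * M.det := by
  have hsign (π : Equiv.Perm (Fin m)) : (Equiv.Perm.sign π : ℝ) * Equiv.Perm.sign π = 1 := by
    rw [← Int.cast_mul, ← Units.val_mul, Int.units_mul_self, Units.val_one, Int.cast_one]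
  have hsplit : M.submatrix σ τ = (M.submatrix σ id).submatrix id τ := rfl
  rw [vdm_comp_perm, vdm_comp_perm, hsplit, Matrix.det_permute', Matrix.det_permute]
  linear_combination (vdm x * vdm y * M.det) *
    ((Equiv.Perm.sign τ : ℝ) * Equiv.Perm.sign τ * hsign σ + hsign τ)

theorem zero_le_vdm_mul_vdm_mul_det_of_strictMono {m : ℕ} (K : ℝ → ℝ → ℝ)
    (hK : ∀ x y : Fin m → ℝ, StrictMono x → StrictMono y →
      0 ≤ (Matrix.of fun b c => K (x b) (y c)).det)
    (x y : Fin m → ℝ) : 0 ≤ vdm x * vdm y * (Matrix.of fun b c => K (x b) (y c)).det := by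
  by_cases hx : Function.Injective x
  swap
  · rw [vdm_eq_zero_of_not_injective hx, zero_mul, zero_mul]
  by_cases hy : Function.Injective y
  swap
  · rw [vdm_eq_zero_of_not_injective hy, mul_zero, zero_mul]
  have hx' : StrictMono (x ∘ Tuple.sort x) :=
    (Tuple.monotone_sort x).strictMono_of_injective (hx.comp (Tuple.sort x).injective)
  have hy' : StrictMono (y ∘ Tuple.sort y) :=
    (Tuple.monotone_sort y).strictMono_of_injective (hy.comp (Tuple.sort y).injective)
  rw [← vdm_comp_mul_vdm_comp_mul_det_submatrix x y (Tuple.sort x) (Tuple.sort y)]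
  exact mul_nonneg (mul_pos (vdm_pos_of_strictMono hx') (vdm_pos_of_strictMono hy')).le
    (hK _ _ hx' hy')

theorem exists_strictMono_hasDerivAt_eq_zero {f f' : ℝ → ℝ} (hf : ∀ s, HasDerivAt f (f' s) s)
    {n : ℕ} {t : Fin (n + 1) → ℝ} (ht : StrictMono t) (hzero : ∀ c, f (t c) = 0) :
    ∃ s : Fin n → ℝ, StrictMono s ∧ ∀ c, f' (s c) = 0 := by
  have hcont : Continuous f := continuous_iff_continuousAt.2 fun s => (hf s).continuousAt
  have hrolle (c : Fin n) : ∃ s ∈ Set.Ioo (t c.castSucc) (t c.succ), f' s = 0 :=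
    exists_hasDerivAt_eq_zero (ht c.castSucc_lt_succ) hcont.continuousOn
      (by rw [hzero, hzero]) fun s _ => hf s
  choose s hs hs0 using hrolle
  refine ⟨s, fun c c' hcc' => ?_, hs0⟩
  calc s c < t c.succ := (hs c).2
    _ ≤ t c'.castSucc := ht.monotone (Fin.succ_le_castSucc_iff.2 hcc')
    _ < s c' := (hs c').1

theorem eq_zero_of_forall_sum_mul_exp_mul_eq_zero :
    ∀ {n : ℕ} {u t : Fin n → ℝ} (a : Fin n → ℝ), Function.Injective u → StrictMono t →
      (∀ c, ∑ b, a b * Real.exp (u b * t c) = 0) → a = 0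
  | 0, _, _, a, _, _, _ => Subsingleton.elim a 0
  | n + 1, u, t, a, hu, ht, h => by
    -- after multiplying by `exp (-u 0 * s)`, differentiation kills the term `b = 0`
    set v : Fin (n + 1) → ℝ := fun b => u b - u 0 with hv
    have hshift (c : Fin (n + 1)) : ∑ b, a b * Real.exp (v b * t c) = 0 := by
      rw [← mul_zero (Real.exp (-u 0 * t c)), ← h c, Finset.mul_sum]
      refine Finset.sum_congr rfl fun b _ => ?_
      rw [mul_left_comm, ← Real.exp_add, hv]
      ring_nf
    have hderiv (s : ℝ) : HasDerivAt (fun s => ∑ b, a b * Real.exp (v b * s))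
        (∑ b, a b * v b * Real.exp (v b * s)) s :=
      HasDerivAt.fun_sum fun b _ =>
        ((((hasDerivAt_id' s).const_mul (v b)).exp).const_mul (a b)).congr_deriv (by ring)
    obtain ⟨s, hs, hs0⟩ := exists_strictMono_hasDerivAt_eq_zero hderiv ht hshift
    have htail : (fun b : Fin n => a b.succ * v b.succ) = 0 :=
      eq_zero_of_forall_sum_mul_exp_mul_eq_zero _
        (fun b b' hbb' => Fin.succ_injective n (hu (sub_left_inj.1 hbb'))) hs
        fun c => by simpa [Fin.sum_univ_succ, hv] using hs0 c
    have hsucc (b : Fin n) : a b.succ = 0 :=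
      (mul_eq_zero.1 (congrFun htail b)).resolve_right
        (sub_ne_zero.2 (hu.ne (Fin.succ_ne_zero b)))
    have hzero : a 0 = 0 := by simpa [Fin.sum_univ_succ, hsucc, hv] using hshift 0
    funext b
    cases b using Fin.cases with
    | zero => exact hzero
    | succ b => exact hsucc b

theorem det_exp_mul_ne_zero {n : ℕ} {u w : Fin n → ℝ} (hu : StrictMono u)
    (hw : Function.Injective w) : (Matrix.of fun b c => Real.exp (u b * w c)).det ≠ 0 := by
  intro hdet
  obtain ⟨v, hv, hmv⟩ := Matrix.exists_mulVec_eq_zero_iff.2 hdet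
  refine hv (eq_zero_of_forall_sum_mul_exp_mul_eq_zero v hw hu fun b => ?_)
  simpa [Matrix.mulVec, dotProduct, mul_comm] using congrFun hmv b

theorem det_exp_mul_pos {n : ℕ} {u w : Fin n → ℝ} (hu : StrictMono u) (hw : StrictMono w) :
    0 < (Matrix.of fun b c => Real.exp (u b * w c)).det := by
  -- deform `w` linearly into `c ↦ c`, where the matrix is the Vandermonde matrix of `exp ∘ u`
  set G : ℝ → ℝ := fun r =>
    (Matrix.of fun b c : Fin n => Real.exp (u b * ((1 - r) * w c + r * c))).det with hG
  have hpath (r : ℝ) (hr : r ∈ Set.Icc (0 : ℝ) 1) :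
      StrictMono fun c : Fin n => (1 - r) * w c + r * c := fun c c' hcc' => by
    have := convex_Ioi (0 : ℝ) (Set.mem_Ioi.2 (sub_pos.2 (hw hcc')))
      (Set.mem_Ioi.2 (sub_pos.2 (Nat.cast_lt.2 hcc')))
      (sub_nonneg.2 hr.2) hr.1 (sub_add_cancel 1 r)
    simp only [smul_eq_mul, Set.mem_Ioi] at this
    linarith
  have hGcont : Continuous G :=
    Continuous.matrix_det (continuous_matrix fun b c => by fun_prop)
  have hG1 : 0 < G 1 := by
    have : G 1 = (Matrix.vandermonde fun b => Real.exp (u b)).det := by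
      simp [hG, Matrix.vandermonde, ← Real.exp_nat_mul, mul_comm]
    rw [this, Matrix.det_vandermonde]
    exact Finset.prod_pos fun b _ => Finset.prod_pos fun c hc =>
      sub_pos.2 (Real.exp_lt_exp.2 (hu (Finset.mem_Ioi.1 hc)))
  by_contra! hle
  obtain ⟨r, hr, hGr⟩ := intermediate_value_Icc zero_le_one hGcont.continuousOn
    (show (0 : ℝ) ∈ Set.Icc (G 0) (G 1) from ⟨by simpa [hG] using hle, hG1.le⟩)
  exact det_exp_mul_ne_zero hu (hpath r hr).injective hGr

/-- the function `x ↦ exp(−e^{−x})` is a Pólya frequency function of infinite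
order. -/
theorem exp_neg_exp_neg_isPolyaFrequencyFunction
    (n : ℕ) (x y : Fin n → ℝ) :
    0 ≤ vdm x * vdm y *
      Matrix.det (Matrix.of fun b c : Fin n => Real.exp (-Real.exp (-(x b - y c)))) := by
  refine zero_le_vdm_mul_vdm_mul_det_of_strictMono (fun s t => Real.exp (-Real.exp (-(s - t))))
    (fun x y hx hy => ?_) x y
  have hfactor : (Matrix.of fun b c => Real.exp (-Real.exp (-(x b - y c)))) =
      Matrix.of fun b c => Real.exp (-Real.exp (-x b) * Real.exp (y c)) := by
    ext b c
    rw [Matrix.of_apply, Matrix.of_apply, neg_mul, ← Real.exp_add, neg_sub, sub_eq_neg_add]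
  rw [hfactor]
  refine (det_exp_mul_pos (fun s t hst => ?_) (Real.exp_strictMono.comp hy)).le
  simpa using Real.exp_lt_exp.2 (neg_lt_neg (hx hst))
end

section
/- Let a ∈ (0, 1/4) and define ω : (0,∞) → ℝ by ω(x) = exp(−1/(a−x)) for 0 < x < a and ω(x) = 0 for x ≥ a. Then ω gives rise to a Pólya ensemble on Mat_ℂ(2,2) (i.e. with n = 2 and ν = 0); in particular, for all x₁, x₂ ∈ (0,∞): (x₂ − x₁) · ( ω(x₁)·(D₀ω)(x₂) − ω(x₂)·(D₀ω)(x₁) ) ≥ 0, where (D₀ω)(x) = d/dx( x·ω′(x) ). -/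
/-- The differential operator `(D₀ f)(x) = d/dx( x · f′(x) )`, the case `ν = 0` of
`(D_ν f)(x) = x^ν · d/dx( x^{1−ν} · f′(x) )`. -/
noncomputable def D0 (f : ℝ → ℝ) : ℝ → ℝ := fun x => deriv (fun t : ℝ => t * deriv f t) x

/-! On `(0, a)` one has `D₀ω = ω · ψ(a - x)` with `ψ(u) = (u² - (1 + 2a)u + a) / u⁴`, and
`ψ'(u) = -(2u² - 3(1 + 2a)u + 4a) / u⁵`, whose numerator stays positive on `(0, a)` exactly when
`a < 1/4`. So `D₀ω / ω` increases with `x` and the determinant has the sign of `x₂ - x₁`. On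
`[a, ∞)` both `ω` and `D₀ω` vanish, because `ω` agrees on `(0, ∞)` with the smooth function
`x ↦ expNegInvGlue (a - x)`, which is flat there. -/

open Real Set Filter Topology

theorem Filter.EventuallyEq.D0_eq {f g : ℝ → ℝ} {x : ℝ} (h : f =ᶠ[𝓝 x] g) :
    D0 f x = D0 g x :=
  EventuallyEq.deriv_eq <| h.eventuallyEq_nhds.mono fun _ hy => by simp only [hy.deriv_eq]

theorem deriv_eq_zero_of_eqOn_Ici {f : ℝ → ℝ} {a x : ℝ} (hf : EqOn f 0 (Ici a))
    (hd : DifferentiableAt ℝ f x) (hx : a ≤ x) : deriv f x = 0 := by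
  rw [← hd.derivWithin (uniqueDiffOn_Ici a x hx), derivWithin_congr hf (hf hx), derivWithin_zero]
  rfl

theorem D0_eq_zero_of_eqOn_Ici {f : ℝ → ℝ} {a x : ℝ} (hf : ContDiff ℝ 2 f)
    (h0 : EqOn f 0 (Ici a)) (hx : a ≤ x) : D0 f x = 0 := by
  obtain ⟨hf₁, -, hf'⟩ := (contDiff_succ_iff_deriv (n := 1)).mp hf
  refine deriv_eq_zero_of_eqOn_Ici (fun t ht => ?_)
    (differentiableAt_id.mul ((hf'.differentiable one_ne_zero) x)) hx
  simp [deriv_eq_zero_of_eqOn_Ici h0 (hf₁ t) ht]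

theorem sub_mul_cross_nonneg {f g : ℝ → ℝ} {s : Set ℝ}
    (h : ∀ x₁ ∈ s, ∀ x₂ ∈ s, x₁ ≤ x₂ → 0 ≤ f x₁ * g x₂ - f x₂ * g x₁)
    {x₁ x₂ : ℝ} (hx₁ : x₁ ∈ s) (hx₂ : x₂ ∈ s) :
    0 ≤ (x₂ - x₁) * (f x₁ * g x₂ - f x₂ * g x₁) := by
  rcases le_total x₁ x₂ with h₁₂ | h₂₁
  · exact mul_nonneg (sub_nonneg.2 h₁₂) (h x₁ hx₁ x₂ hx₂ h₁₂)
  · have := mul_nonneg (sub_nonneg.2 h₂₁) (h x₂ hx₂ x₁ hx₁ h₂₁)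
    linarith

noncomputable def bumpWeight (a x : ℝ) : ℝ := expNegInvGlue (a - x)

/-- `D₀ω / ω` at the point `x = a - u`, for `ω = bumpWeight a`. -/
noncomputable def bumpD0Quotient (a u : ℝ) : ℝ := (u ^ 2 - (1 + 2 * a) * u + a) / u ^ 4

section bumpWeight

variable {a x : ℝ}

theorem contDiff_bumpWeight {n : ℕ∞} : ContDiff ℝ n (bumpWeight a) :=
  expNegInvGlue.contDiff.comp (contDiff_const.sub contDiff_id)

theorem bumpWeight_of_le (hx : a ≤ x) : bumpWeight a x = 0 :=
  expNegInvGlue.zero_of_nonpos (sub_nonpos.2 hx)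

theorem bumpWeight_of_lt (hx : x < a) : bumpWeight a x = exp (-(a - x)⁻¹) := by
  simp [bumpWeight, expNegInvGlue, hx]

theorem bumpWeight_pos (hx : x < a) : 0 < bumpWeight a x :=
  expNegInvGlue.pos_of_pos (sub_pos.2 hx)

theorem hasDerivAt_bumpWeight (hx : x < a) :
    HasDerivAt (bumpWeight a) (-(bumpWeight a x / (a - x) ^ 2)) x := by
  have hu : a - x ≠ 0 := (sub_pos.2 hx).ne'
  have h : HasDerivAt (fun t => exp (-(a - t)⁻¹)) _ x :=
    (((hasDerivAt_id x).const_sub a).inv hu).neg.exp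
  refine (h.congr_of_eventuallyEq
    ((eventually_lt_nhds hx).mono fun t ht => bumpWeight_of_lt ht)).congr_deriv ?_
  rw [bumpWeight_of_lt hx]
  simp only [Pi.neg_apply, Pi.inv_apply, id]
  ring

theorem D0_bumpWeight_of_lt (hx : x < a) :
    D0 (bumpWeight a) x = bumpWeight a x * bumpD0Quotient a (a - x) := by
  have hu : a - x ≠ 0 := (sub_pos.2 hx).ne'
  have hderiv : (fun t => t * deriv (bumpWeight a) t) =ᶠ[𝓝 x]
      fun t => -(t * bumpWeight a t / (a - t) ^ 2) :=
    (eventually_lt_nhds hx).mono fun t ht => by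
      simp only [(hasDerivAt_bumpWeight ht).deriv]; ring
  have h : HasDerivAt (fun t => -(t * bumpWeight a t / (a - t) ^ 2)) _ x :=
    (((hasDerivAt_id x).mul (hasDerivAt_bumpWeight hx)).div
    (((hasDerivAt_id x).const_sub a).pow 2) (pow_ne_zero 2 hu)).neg
  rw [D0, hderiv.deriv_eq, h.deriv, bumpD0Quotient]
  simp only [id, Pi.pow_apply, Pi.mul_apply, Nat.cast_ofNat]
  field_simp
  ring

theorem hasDerivAt_bumpD0Quotient {u : ℝ} (hu : u ≠ 0) :
    HasDerivAt (bumpD0Quotient a) (-(2 * u ^ 2 - 3 * (1 + 2 * a) * u + 4 * a) / u ^ 5) u := by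
  have h : HasDerivAt (fun u => (u ^ 2 - (1 + 2 * a) * u + a) / u ^ 4) _ u :=
    ((((hasDerivAt_id u).pow 2).sub ((hasDerivAt_id u).const_mul (1 + 2 * a))).add_const a).div
      ((hasDerivAt_id u).pow 4) (pow_ne_zero 4 hu)
  refine h.congr_deriv ?_
  simp only [id, Pi.pow_apply, Pi.sub_apply, Nat.cast_ofNat]
  field_simp
  ring

theorem antitoneOn_bumpD0Quotient (ha : a < 1 / 4) :
    AntitoneOn (bumpD0Quotient a) (Ioo 0 a) := by
  have hderiv : ∀ u ∈ Ioo 0 a, HasDerivAt (bumpD0Quotient a) _ u := fun u hu =>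
    hasDerivAt_bumpD0Quotient hu.1.ne'
  refine antitoneOn_of_hasDerivWithinAt_nonpos (convex_Ioo 0 a)
    (fun u hu => (hderiv u hu).continuousAt.continuousWithinAt)
    (fun u hu => (hderiv u (interior_subset hu)).hasDerivWithinAt) ?_
  rw [interior_Ioo]
  rintro u ⟨hu0, hua⟩
  -- the quadratic is decreasing on `(0, a)` and equals `a (1 - 4a) > 0` at `u = a`
  have hq : 0 < 2 * u ^ 2 - 3 * (1 + 2 * a) * u + 4 * a := by
    nlinarith [mul_nonneg (sub_nonneg.2 hua.le) (by linarith : (0:ℝ) ≤ 3 + 4 * a - 2 * u),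
      mul_pos (hu0.trans hua) (by linarith : (0:ℝ) < 1 - 4 * a)]
  exact div_nonpos_of_nonpos_of_nonneg (neg_nonpos.2 hq.le) (pow_pos hu0 5).le

theorem bumpWeight_mul_D0_sub_nonneg (ha : a < 1 / 4) {x₁ x₂ : ℝ} (hx₁ : 0 < x₁) (h : x₁ ≤ x₂) :
    0 ≤ bumpWeight a x₁ * D0 (bumpWeight a) x₂ - bumpWeight a x₂ * D0 (bumpWeight a) x₁ := by
  rcases le_or_gt a x₂ with hx₂ | hx₂
  · have h0 : EqOn (bumpWeight a) 0 (Ici a) := fun _ => bumpWeight_of_le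
    simp [h0 hx₂, D0_eq_zero_of_eqOn_Ici contDiff_bumpWeight h0 hx₂]
  have hx₁a := h.trans_lt hx₂
  rw [D0_bumpWeight_of_lt hx₁a, D0_bumpWeight_of_lt hx₂]
  have hq := antitoneOn_bumpD0Quotient ha ⟨sub_pos.2 hx₂, by linarith⟩
    ⟨sub_pos.2 hx₁a, by linarith⟩ (sub_le_sub_left h a)
  have := mul_nonneg (mul_pos (bumpWeight_pos hx₁a) (bumpWeight_pos hx₂)).le (sub_nonneg.2 hq)
  linarith

end bumpWeight

theorem bump_weight_polyaEnsemble_two_by_two_general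
    (a : ℝ) (ha4 : a < 1/4) (ω : ℝ → ℝ)
    (hω1 : ∀ x : ℝ, 0 < x → x < a → ω x = Real.exp (-(1 / (a - x))))
    (hω2 : ∀ x : ℝ, a ≤ x → ω x = 0) :
    ∀ x₁ x₂ : ℝ, 0 < x₁ → 0 < x₂ →
      0 ≤ (x₂ - x₁) * (ω x₁ * D0 ω x₂ - ω x₂ * D0 ω x₁) := by
  have hω : EqOn ω (bumpWeight a) (Ioi 0) := fun x hx => by
    rcases lt_or_ge x a with hxa | hxa
    · rw [hω1 x hx hxa, bumpWeight_of_lt hxa, one_div]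
    · rw [hω2 x hxa, bumpWeight_of_le hxa]
  have hD0 : EqOn (D0 ω) (D0 (bumpWeight a)) (Ioi 0) := fun x hx =>
    (hω.eventuallyEq_of_mem (Ioi_mem_nhds hx)).D0_eq
  intro x₁ x₂ h₁ h₂
  rw [hω h₁, hω h₂, hD0 h₁, hD0 h₂]
  exact sub_mul_cross_nonneg (s := Ioi 0)
    (fun _ hy₁ _ _ h => bumpWeight_mul_D0_sub_nonneg ha4 hy₁ h) h₁ h₂

/-- for `a ∈ (0, 1/4)`, the weight `ω(x) = exp(−1/(a−x))·𝟙_{(0,a)}(x)` gives rise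
to a Pólya ensemble on `Mat_ℂ(2,2)` (`n = 2`, `ν = 0`), i.e. the induced squared-singular-value
density `Δ₂(x)·det[(D₀^{b−1}ω)(x_c)]` is nonnegative. -/
theorem bump_weight_polyaEnsemble_two_by_two
    (a : ℝ) (ha0 : 0 < a) (ha4 : a < 1/4) (ω : ℝ → ℝ)
    (hω1 : ∀ x : ℝ, 0 < x → x < a → ω x = Real.exp (-(1 / (a - x))))
    (hω2 : ∀ x : ℝ, a ≤ x → ω x = 0) :
    ∀ x₁ x₂ : ℝ, 0 < x₁ → 0 < x₂ →
      0 ≤ (x₂ - x₁) * (ω x₁ * D0 ω x₂ - ω x₂ * D0 ω x₁) :=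
  bump_weight_polyaEnsemble_two_by_two_general a ha4 ω hω1 hω2
end
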